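/- arXiv:1910.06559 — 8 statements merged into one kernel-verified Lean document; each statement's English description precedes it below -/
import Mathlib

section
/- For every integer n ≥ 1, budgets X_A, X_B with 0 < X_A ≤ X_B, and battlefield values w^A_i, w^B_i > 0 (i = 1,…,n), Equation (2) has at least one positive solution; that is, there exists γ > 0 such that X_B γ / X_A = (γ² Σ_{i∈Ω_A(γ)} (v^B_i)²/v^A_i + Σ_{i∉Ω_A(γ)} v^A_i) / (Σ_{i∈Ω_A(γ)} v^B_i + γ^{-2} Σ_{i∉Ω_A(γ)} (v^A_i)²/v^B_i). -/
/-!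
Each summand of Equation (2) is a minimum: for `i ∈ Ω_A(γ)` the term `γ² (v^B_i)² / v^A_i` is the
smaller of itself and `v^A_i`, otherwise `v^A_i` is, and dually in the denominator. So the
numerator `N(γ)` and denominator `D(γ)` are sums of minima of continuous functions, hence
continuous on `(0, ∞)`, and the equation reads `X_B γ D(γ) = X_A N(γ)`. Near `0`, `D = Σ v^B_i`
while `N = O(γ²)`, so the left side is larger; for large `γ`, `N = Σ v^A_i` while `γ D = O(1/γ)`,
so the right side is larger. The intermediate value theorem gives a root.
-/

open Finset

/-- Normalized battlefield values: `nv w i = w i / ∑_j w j`. -/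
noncomputable def nv {n : ℕ} (w : Fin n → ℝ) (i : Fin n) : ℝ := w i / ∑ j, w j

/-- The set `Ω_A(γ) = {i : v^A_i / v^B_i > γ}`. -/
noncomputable def OmegaA {n : ℕ} (wA wB : Fin n → ℝ) (γ : ℝ) : Finset (Fin n) :=
  Finset.univ.filter fun i => γ < nv wA i / nv wB i

/-- Equation (2). -/
def Eq2 {n : ℕ} (XA XB : ℝ) (wA wB : Fin n → ℝ) (γ : ℝ) : Prop :=
  XB * γ / XA =
    (γ ^ 2 * ∑ i ∈ OmegaA wA wB γ, (nv wB i) ^ 2 / nv wA i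
        + ∑ i ∈ (OmegaA wA wB γ)ᶜ, nv wA i) /
    (∑ i ∈ OmegaA wA wB γ, nv wB i
        + (γ ^ 2)⁻¹ * ∑ i ∈ (OmegaA wA wB γ)ᶜ, (nv wA i) ^ 2 / nv wB i)

open Filter Topology Set

lemma nv_pos {n : ℕ} {w : Fin n → ℝ} (hw : ∀ i, 0 < w i) (i : Fin n) : 0 < nv w i :=
  div_pos (hw i) (sum_pos (fun j _ => hw j) ⟨i, mem_univ i⟩)

namespace Blotto

section Scalar

variable {a b γ : ℝ}

lemma min_mul_sq_div_of_le (ha : 0 < a) (hb : 0 < b) (hγ : 0 ≤ γ) (h : γ ≤ a / b) :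
    min a (γ ^ 2 * (b ^ 2 / a)) = γ ^ 2 * (b ^ 2 / a) := by
  rw [le_div_iff₀ hb] at h
  refine min_eq_right ?_
  rw [mul_div_assoc', div_le_iff₀ ha]
  nlinarith [mul_self_le_mul_self (by positivity : 0 ≤ γ * b) h]

lemma min_mul_sq_div_of_ge (ha : 0 < a) (hb : 0 < b) (h : a / b ≤ γ) :
    min a (γ ^ 2 * (b ^ 2 / a)) = a := by
  rw [div_le_iff₀ hb] at h
  refine min_eq_left ?_
  rw [mul_div_assoc', le_div_iff₀ ha]
  nlinarith [mul_self_le_mul_self ha.le h]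

lemma min_inv_sq_mul_sq_div_of_le (hb : 0 < b) (hγ : 0 < γ) (h : γ ≤ a / b) :
    min b ((γ ^ 2)⁻¹ * (a ^ 2 / b)) = b := by
  rw [le_div_iff₀ hb] at h
  refine min_eq_left ?_
  rw [← div_eq_inv_mul, div_div, le_div_iff₀ (by positivity)]
  nlinarith [mul_self_le_mul_self (by positivity : 0 ≤ γ * b) h]

lemma min_inv_sq_mul_sq_div_of_ge (ha : 0 < a) (hb : 0 < b) (hγ : 0 < γ) (h : a / b ≤ γ) :
    min b ((γ ^ 2)⁻¹ * (a ^ 2 / b)) = (γ ^ 2)⁻¹ * (a ^ 2 / b) := by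
  rw [div_le_iff₀ hb] at h
  refine min_eq_right ?_
  rw [← div_eq_inv_mul, div_div, div_le_iff₀ (by positivity)]
  nlinarith [mul_self_le_mul_self ha.le h]

end Scalar

variable {ι : Type*} [Fintype ι] {a b : ι → ℝ}

noncomputable def numerator (a b : ι → ℝ) (γ : ℝ) : ℝ :=
  ∑ i, min (a i) (γ ^ 2 * (b i ^ 2 / a i))

noncomputable def denominator (a b : ι → ℝ) (γ : ℝ) : ℝ :=
  ∑ i, min (b i) ((γ ^ 2)⁻¹ * (a i ^ 2 / b i))

lemma numerator_eq [DecidableEq ι] (ha : ∀ i, 0 < a i) (hb : ∀ i, 0 < b i) {γ : ℝ}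
    (hγ : 0 < γ) :
    numerator a b γ = γ ^ 2 * ∑ i ∈ univ.filter (fun i => γ < a i / b i), b i ^ 2 / a i
      + ∑ i ∈ (univ.filter (fun i => γ < a i / b i))ᶜ, a i := by
  rw [compl_filter, mul_sum, ← sum_ite, numerator]
  refine sum_congr rfl fun i _ => ?_
  split_ifs with h
  · exact min_mul_sq_div_of_le (ha i) (hb i) hγ.le h.le
  · exact min_mul_sq_div_of_ge (ha i) (hb i) (not_lt.mp h)

lemma denominator_eq [DecidableEq ι] (ha : ∀ i, 0 < a i) (hb : ∀ i, 0 < b i) {γ : ℝ}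
    (hγ : 0 < γ) :
    denominator a b γ = ∑ i ∈ univ.filter (fun i => γ < a i / b i), b i
      + (γ ^ 2)⁻¹ * ∑ i ∈ (univ.filter (fun i => γ < a i / b i))ᶜ, a i ^ 2 / b i := by
  rw [compl_filter, mul_sum, ← sum_ite, denominator]
  refine sum_congr rfl fun i _ => ?_
  split_ifs with h
  · exact min_inv_sq_mul_sq_div_of_le (hb i) hγ h.le
  · exact min_inv_sq_mul_sq_div_of_ge (ha i) (hb i) hγ (not_lt.mp h)

lemma continuous_numerator : Continuous (numerator a b) := by
  unfold numerator; fun_prop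

lemma continuousOn_denominator : ContinuousOn (denominator a b) (Ioi 0) := by
  have hinv : ContinuousOn (fun γ : ℝ => (γ ^ 2)⁻¹) (Ioi 0) :=
    (continuousOn_pow 2).inv₀ fun γ hγ => pow_ne_zero 2 (ne_of_gt hγ)
  exact continuousOn_finsetSum _ fun i _ =>
    continuous_min.comp_continuousOn (continuousOn_const.prodMk (hinv.mul continuousOn_const))

lemma denominator_pos [Nonempty ι] (ha : ∀ i, 0 < a i) (hb : ∀ i, 0 < b i) {γ : ℝ}
    (hγ : 0 < γ) : 0 < denominator a b γ :=
  sum_pos (fun i _ => lt_min (hb i) (by have := ha i; have := hb i; positivity)) univ_nonempty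

lemma numerator_le (γ : ℝ) : numerator a b γ ≤ γ ^ 2 * ∑ i, b i ^ 2 / a i := by
  rw [mul_sum]
  exact sum_le_sum fun i _ => min_le_right _ _

lemma eventually_denominator_eq_sum (ha : ∀ i, 0 < a i) (hb : ∀ i, 0 < b i) :
    ∀ᶠ γ in 𝓝[>] 0, denominator a b γ = ∑ i, b i := by
  have hsmall : ∀ᶠ γ in 𝓝[>] (0 : ℝ), ∀ i, γ ≤ a i / b i :=
    eventually_all.2 fun i => nhdsWithin_le_nhds (Iic_mem_nhds (div_pos (ha i) (hb i)))
  filter_upwards [self_mem_nhdsWithin, hsmall] with γ hγ hγle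
  exact sum_congr rfl fun i _ => min_inv_sq_mul_sq_div_of_le (hb i) hγ (hγle i)

lemma eventually_numerator_eq_sum (ha : ∀ i, 0 < a i) (hb : ∀ i, 0 < b i) :
    ∀ᶠ γ in atTop, numerator a b γ = ∑ i, a i := by
  filter_upwards [eventually_all.2 fun i => eventually_ge_atTop (a i / b i)] with γ hγ
  exact sum_congr rfl fun i _ => min_mul_sq_div_of_ge (ha i) (hb i) (hγ i)

lemma eventually_denominator_eq (ha : ∀ i, 0 < a i) (hb : ∀ i, 0 < b i) :
    ∀ᶠ γ in atTop, denominator a b γ = (γ ^ 2)⁻¹ * ∑ i, a i ^ 2 / b i := by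
  filter_upwards [eventually_gt_atTop 0,
    eventually_all.2 fun i => eventually_ge_atTop (a i / b i)] with γ hγ hγge
  rw [mul_sum]
  exact sum_congr rfl fun i _ => min_inv_sq_mul_sq_div_of_ge (ha i) (hb i) hγ (hγge i)

variable [Nonempty ι] {x y : ℝ}

lemma eventually_mul_numerator_lt (ha : ∀ i, 0 < a i) (hb : ∀ i, 0 < b i) (hx : 0 < x)
    (hy : 0 < y) : ∀ᶠ γ in 𝓝[>] 0, x * numerator a b γ < y * γ * denominator a b γ := by
  set B := ∑ i, b i
  set T := ∑ i, b i ^ 2 / a i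
  have hB : 0 < B := sum_pos (fun i _ => hb i) univ_nonempty
  have hT : 0 < T := sum_pos (fun i _ => by have := ha i; have := hb i; positivity) univ_nonempty
  have hsmall : ∀ᶠ γ in 𝓝[>] (0 : ℝ), γ < y * B / (x * T) :=
    nhdsWithin_le_nhds (Iio_mem_nhds (by positivity))
  filter_upwards [self_mem_nhdsWithin, hsmall, eventually_denominator_eq_sum ha hb]
    with γ hγ hγsmall hD
  calc x * numerator a b γ ≤ x * (γ ^ 2 * T) :=
        mul_le_mul_of_nonneg_left (numerator_le γ) hx.le
    _ = γ * (γ * (x * T)) := by ring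
    _ < γ * (y * B) := mul_lt_mul_of_pos_left ((lt_div_iff₀ (by positivity)).1 hγsmall) hγ
    _ = y * γ * denominator a b γ := by rw [hD]; ring

lemma eventually_mul_denominator_lt (ha : ∀ i, 0 < a i) (hb : ∀ i, 0 < b i) (hx : 0 < x)
    (hy : 0 < y) : ∀ᶠ γ in atTop, y * γ * denominator a b γ < x * numerator a b γ := by
  set A := ∑ i, a i
  set S := ∑ i, a i ^ 2 / b i with hS
  have hA : 0 < A := sum_pos (fun i _ => ha i) univ_nonempty
  filter_upwards [eventually_gt_atTop 0, eventually_gt_atTop (y * S / (x * A)),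
    eventually_numerator_eq_sum ha hb, eventually_denominator_eq ha hb] with γ hγ hγlarge hN hD
  rw [div_lt_iff₀ (by positivity)] at hγlarge
  calc y * γ * denominator a b γ = y * S / γ := by rw [hD, ← hS]; field_simp
    _ < x * numerator a b γ := by rw [hN, div_lt_iff₀ hγ]; linarith

theorem exists_pos_mul_denominator_eq (ha : ∀ i, 0 < a i) (hb : ∀ i, 0 < b i) (hx : 0 < x)
    (hy : 0 < y) : ∃ γ, 0 < γ ∧ y * γ * denominator a b γ = x * numerator a b γ := by
  obtain ⟨γ₁, hF₁, hγ₁⟩ :=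
    ((eventually_mul_numerator_lt ha hb hx hy).and self_mem_nhdsWithin).exists
  obtain ⟨γ₂, hF₂, hγ₂⟩ :=
    ((eventually_mul_denominator_lt ha hb hx hy).and (eventually_gt_atTop 0)).exists
  have hpos : uIcc γ₁ γ₂ ⊆ Ioi 0 := ordConnected_Ioi.uIcc_subset hγ₁ hγ₂
  have hcont : ContinuousOn (fun γ => y * γ * denominator a b γ - x * numerator a b γ)
      (uIcc γ₁ γ₂) :=
    ((continuousOn_const.mul continuousOn_id).mul (continuousOn_denominator.mono hpos)).sub
      (continuous_const.mul continuous_numerator).continuousOn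
  obtain ⟨γ, hγ, hroot⟩ :=
    intermediate_value_uIcc hcont (mem_uIcc_of_ge (sub_neg.2 hF₂).le (sub_pos.2 hF₁).le)
  exact ⟨γ, hpos hγ, sub_eq_zero.1 hroot⟩

end Blotto

/-- Equation (2) has at least one positive solution. -/
theorem stmt0 (n : ℕ) (hn : 1 ≤ n) (XA XB : ℝ) (hXA : 0 < XA) (hXAB : XA ≤ XB)
    (wA wB : Fin n → ℝ) (hwA : ∀ i, 0 < wA i) (hwB : ∀ i, 0 < wB i) :
    ∃ γ : ℝ, 0 < γ ∧ Eq2 XA XB wA wB γ := by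
  have : Nonempty (Fin n) := ⟨⟨0, hn⟩⟩
  have hA := nv_pos hwA
  have hB := nv_pos hwB
  obtain ⟨γ, hγ, hroot⟩ :=
    Blotto.exists_pos_mul_denominator_eq hA hB hXA (hXA.trans_le hXAB)
  refine ⟨γ, hγ, ?_⟩
  rw [Eq2, OmegaA, ← Blotto.numerator_eq hA hB hγ, ← Blotto.denominator_eq hA hB hγ,
    div_eq_div_iff hXA.ne' (Blotto.denominator_pos hA hB hγ).ne']
  exact hroot.trans (mul_comm _ _)
end

section
/- Given constants 0 < w̲ ≤ w̄ and 0 < X_A ≤ X_B, there exist constants γ̲, γ̄, λ̲, λ̄ > 0 (depending only on w̲, w̄, X_A, X_B) such that for every Blotto data satisfying Assumption (A0), every positive solution γ* of Equation (2) with its associated multipliers λ*_A, λ*_B satisfies γ̲ ≤ γ* ≤ γ̄ and λ̲ ≤ λ*_A ≤ λ̄ and λ̲ ≤ λ*_B ≤ λ̄. In particular one may take γ̲ = min{(X_B/X_A)(w̲/w̄)⁴, (w̲/w̄)²} and γ̄ = (X_B/X_A)(w̄/w̲)⁴. -/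
open Finset

/-- The multiplier λ*_A associated with a solution γ of Equation (2). -/
noncomputable def lamA {n : ℕ} (XB : ℝ) (wA wB : Fin n → ℝ) (γ : ℝ) : ℝ :=
  γ ^ 2 / (2 * XB) * ∑ i ∈ OmegaA wA wB γ, (nv wB i) ^ 2 / nv wA i
    + 1 / (2 * XB) * ∑ i ∈ (OmegaA wA wB γ)ᶜ, nv wA i

/-- The multiplier λ*_B associated with a solution γ of Equation (2). -/
noncomputable def lamB {n : ℕ} (XA : ℝ) (wA wB : Fin n → ℝ) (γ : ℝ) : ℝ :=
  1 / (2 * XA) * ∑ i ∈ OmegaA wA wB γ, nv wB i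
    + 1 / (2 * γ ^ 2 * XA) * ∑ i ∈ (OmegaA wA wB γ)ᶜ, (nv wA i) ^ 2 / nv wB i

section aux
variable {n : ℕ} {wlo whi : ℝ}

lemma aux_sum_pos (hwlo : 0 < wlo) (hn : 1 ≤ n)
    {w : Fin n → ℝ} (h : ∀ i, wlo ≤ w i ∧ w i ≤ whi) : 0 < ∑ j, w j :=
  Finset.sum_pos (fun i _ => lt_of_lt_of_le hwlo (h i).1)
    (Finset.univ_nonempty_iff.mpr ⟨⟨0, hn⟩⟩)

lemma aux_nv_pos (hwlo : 0 < wlo) (hn : 1 ≤ n)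
    {w : Fin n → ℝ} (h : ∀ i, wlo ≤ w i ∧ w i ≤ whi) (i : Fin n) : 0 < nv w i :=
  div_pos (lt_of_lt_of_le hwlo (h i).1) (aux_sum_pos hwlo hn h)

lemma aux_sum_nv (hwlo : 0 < wlo) (hn : 1 ≤ n)
    {w : Fin n → ℝ} (h : ∀ i, wlo ≤ w i ∧ w i ≤ whi) : ∑ i, nv w i = 1 := by
  unfold nv
  rw [← Finset.sum_div, div_self (aux_sum_pos hwlo hn h).ne']

lemma aux_nv_le (hwlo : 0 < wlo) (hw : wlo ≤ whi) (hn : 1 ≤ n)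
    {wA wB : Fin n → ℝ}
    (hA : ∀ i, wlo ≤ wA i ∧ wA i ≤ whi) (hB : ∀ i, wlo ≤ wB i ∧ wB i ≤ whi)
    (i : Fin n) : nv wA i ≤ (whi / wlo) ^ 2 * nv wB i := by
  have hwhi : 0 < whi := lt_of_lt_of_le hwlo hw
  have hSA := aux_sum_pos hwlo hn hA
  have hSB := aux_sum_pos hwlo hn hB
  unfold nv
  rw [← mul_div_assoc, div_le_div_iff₀ hSA hSB, div_pow, div_mul_eq_mul_div,
    div_mul_eq_mul_div, le_div_iff₀ (by positivity : (0:ℝ) < wlo ^ 2)]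
  have h1 : wA i * wlo ≤ whi * wB i :=
    mul_le_mul (hA i).2 (hB i).1 hwlo.le hwhi.le
  have h2 : (∑ j, wB j) * wlo ≤ whi * ∑ j, wA j := by
    rw [Finset.sum_mul, Finset.mul_sum]
    exact Finset.sum_le_sum fun j _ => mul_le_mul (hB j).2 (hA j).1 hwlo.le hwhi.le
  nlinarith [mul_le_mul h1 h2 (mul_nonneg hSB.le hwlo.le) (mul_nonneg hwhi.le (lt_of_lt_of_le hwlo (hB i).1).le)]

end aux

set_option maxHeartbeats 4000000 in
/-- Boundedness of γ*, λ*_A, λ*_B under Assumption (A0). -/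
theorem stmt1 (wlo whi XA XB : ℝ) (hwlo : 0 < wlo) (hw : wlo ≤ whi)
    (hXA : 0 < XA) (hXAB : XA ≤ XB) :
    ∃ γlo γhi ldlo ldhi : ℝ,
      0 < γlo ∧ 0 < γhi ∧ 0 < ldlo ∧ 0 < ldhi ∧
      γlo = min (XB / XA * (wlo / whi) ^ 4) ((wlo / whi) ^ 2) ∧
      γhi = XB / XA * (whi / wlo) ^ 4 ∧
      ∀ (n : ℕ), 1 ≤ n → ∀ (wA wB : Fin n → ℝ),
        (∀ i, wlo ≤ wA i ∧ wA i ≤ whi) → (∀ i, wlo ≤ wB i ∧ wB i ≤ whi) →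
        ∀ γ : ℝ, 0 < γ → Eq2 XA XB wA wB γ →
          γlo ≤ γ ∧ γ ≤ γhi ∧
          ldlo ≤ lamA XB wA wB γ ∧ lamA XB wA wB γ ≤ ldhi ∧
          ldlo ≤ lamB XA wA wB γ ∧ lamB XA wA wB γ ≤ ldhi := by
  have hXB : 0 < XB := lt_of_lt_of_le hXA hXAB
  have hwhi : 0 < whi := lt_of_lt_of_le hwlo hw
  refine ⟨min (XB / XA * (wlo / whi) ^ 4) ((wlo / whi) ^ 2),
    XB / XA * (whi / wlo) ^ 4,
    min ((((wlo/whi)^2)^3)/(2*XB)) (((wlo/whi)^2/((whi/wlo)^2*(XB/XA))^2)/(2*XA)),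
    max (((((whi/wlo)^2*(XB/XA))^2)*(whi/wlo)^2)/(2*XB)) ((((whi/wlo)^2)^3)/(2*XA)),
    lt_min (by positivity) (by positivity),
    by positivity,
    lt_min (by positivity) (by positivity),
    lt_of_lt_of_le (by positivity) (le_max_left _ _),
    rfl, rfl, ?_⟩
  intro n hn wA wB hA hB γ hγ heq
  set c : ℝ := (wlo/whi)^2 with hc_def
  set r2 : ℝ := (whi/wlo)^2 with hr2_def
  set M : ℝ := r2 * (XB/XA) with hM_def
  clear_value M
  clear_value r2
  clear_value c
  have hc : 0 < c := by rw [hc_def]; positivity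
  have hr2 : 0 < r2 := by rw [hr2_def]; positivity
  have hr2ge1 : 1 ≤ r2 := by
    rw [hr2_def]
    have : 1 ≤ whi / wlo := (one_le_div hwlo).mpr hw
    nlinarith
  have hcr : c * r2 = 1 := by rw [hc_def, hr2_def]; field_simp
  have hcle1 : c ≤ 1 := by nlinarith
  have hXBA1 : 1 ≤ XB / XA := (one_le_div hXA).mpr hXAB
  have hM : 0 < M := by rw [hM_def]; positivity
  have hMge1 : 1 ≤ M := by rw [hM_def]; nlinarith
  have hvA : ∀ i, 0 < nv wA i := aux_nv_pos hwlo hn hA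
  have hvB : ∀ i, 0 < nv wB i := aux_nv_pos hwlo hn hB
  have hsumA : ∑ i, nv wA i = 1 := aux_sum_nv hwlo hn hA
  have hsumB : ∑ i, nv wB i = 1 := aux_sum_nv hwlo hn hB
  have h1 : ∀ i, nv wA i ≤ r2 * nv wB i := by
    rw [hr2_def]; exact aux_nv_le hwlo hw hn hA hB
  have h2 : ∀ i, nv wB i ≤ r2 * nv wA i := by
    rw [hr2_def]; exact aux_nv_le hwlo hw hn hB hA
  have h1' : ∀ i, c * nv wB i ≤ nv wA i := by
    intro i
    calc c * nv wB i ≤ c * (r2 * nv wA i) := mul_le_mul_of_nonneg_left (h2 i) hc.le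
      _ = (c * r2) * nv wA i := by ring
      _ = nv wA i := by rw [hcr, one_mul]
  have h2' : ∀ i, c * nv wA i ≤ nv wB i := by
    intro i
    calc c * nv wA i ≤ c * (r2 * nv wB i) := mul_le_mul_of_nonneg_left (h1 i) hc.le
      _ = (c * r2) * nv wB i := by ring
      _ = nv wB i := by rw [hcr, one_mul]
  have hratlo : ∀ i, c ≤ nv wA i / nv wB i := fun i => (le_div_iff₀ (hvB i)).mpr
    (by linarith [h1' i])
  have hrathi : ∀ i, nv wA i / nv wB i ≤ r2 := fun i => (div_le_iff₀ (hvB i)).mpr (h1 i)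
  have hmem : ∀ i, i ∈ OmegaA wA wB γ ↔ γ < nv wA i / nv wB i := by
    intro i; simp [OmegaA]
  -- termwise division bounds
  have t1 : ∀ i, c * nv wB i ≤ (nv wB i) ^ 2 / nv wA i := by
    intro i
    rw [le_div_iff₀ (hvA i)]
    nlinarith [h2' i, (hvB i).le]
  have t2 : ∀ i, (nv wB i) ^ 2 / nv wA i ≤ r2 * nv wB i := by
    intro i
    rw [div_le_iff₀ (hvA i)]
    nlinarith [h2 i, (hvB i).le]
  have t3 : ∀ i, c * nv wA i ≤ (nv wA i) ^ 2 / nv wB i := by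
    intro i
    rw [le_div_iff₀ (hvB i)]
    nlinarith [h1' i, (hvA i).le]
  have t4 : ∀ i, (nv wA i) ^ 2 / nv wB i ≤ r2 * nv wA i := by
    intro i
    rw [div_le_iff₀ (hvB i)]
    nlinarith [h1 i, (hvA i).le]
  -- Step 1 : c ≤ γ
  have hγc : c ≤ γ := by
    by_contra hcon
    push_neg at hcon
    have hΩ : OmegaA wA wB γ = univ :=
      Finset.eq_univ_iff_forall.mpr fun i => (hmem i).mpr (lt_of_lt_of_le hcon (hratlo i))
    have hΩc : (OmegaA wA wB γ)ᶜ = ∅ := by rw [hΩ, Finset.compl_univ]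
    have hT : ∑ i, (nv wB i) ^ 2 / nv wA i ≤ r2 := by
      calc ∑ i, (nv wB i) ^ 2 / nv wA i ≤ ∑ i, r2 * nv wB i :=
            Finset.sum_le_sum fun i _ => t2 i
        _ = r2 * ∑ i, nv wB i := by rw [Finset.mul_sum]
        _ = r2 := by rw [hsumB, mul_one]
    unfold Eq2 at heq
    rw [hΩ, Finset.compl_univ, Finset.sum_empty, Finset.sum_empty, hsumB] at heq
    simp only [mul_zero, add_zero, div_one] at heq
    have k0 : γ ≤ XB * γ / XA := by
      rw [le_div_iff₀ hXA]
      nlinarith [mul_le_mul_of_nonneg_right hXAB hγ.le]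
    have k1 : XB * γ / XA ≤ γ ^ 2 * r2 := by
      rw [heq]
      exact mul_le_mul_of_nonneg_left hT (sq_nonneg γ)
    have k2 : c * r2 * γ = γ := by rw [hcr, one_mul]
    have k3 : 0 < (c - γ) * (γ * r2) := mul_pos (sub_pos.mpr hcon) (mul_pos hγ hr2)
    linarith [k0, k1, k2, k3]
  -- Step 2 : γ ≤ M
  have hγM : γ ≤ M := by
    rcases le_or_gt γ r2 with h | hcon
    · rw [hM_def]; nlinarith
    · have hΩ : OmegaA wA wB γ = ∅ :=
        Finset.eq_empty_iff_forall_notMem.mpr fun i hi =>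
          absurd ((hmem i).mp hi) (not_lt.mpr (le_trans (hrathi i) hcon.le))
      have hSlo : c ≤ ∑ i, (nv wA i) ^ 2 / nv wB i := by
        calc c = c * ∑ i, nv wA i := by rw [hsumA, mul_one]
          _ = ∑ i, c * nv wA i := by rw [Finset.mul_sum]
          _ ≤ ∑ i, (nv wA i) ^ 2 / nv wB i := Finset.sum_le_sum fun i _ => t3 i
      have hShi : ∑ i, (nv wA i) ^ 2 / nv wB i ≤ r2 := by
        calc ∑ i, (nv wA i) ^ 2 / nv wB i ≤ ∑ i, r2 * nv wA i :=
              Finset.sum_le_sum fun i _ => t4 i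
          _ = r2 * ∑ i, nv wA i := by rw [Finset.mul_sum]
          _ = r2 := by rw [hsumA, mul_one]
      unfold Eq2 at heq
      rw [hΩ, Finset.compl_empty, Finset.sum_empty, Finset.sum_empty, hsumA] at heq
      simp only [mul_zero, zero_add] at heq
      set S : ℝ := ∑ i, (nv wA i) ^ 2 / nv wB i with hS_def
      clear_value S
      have hSpos : 0 < S := lt_of_lt_of_le hc hSlo
      have e : XB * γ * ((γ ^ 2)⁻¹ * S) = XA * 1 := by
        rw [div_eq_div_iff hXA.ne' (by positivity : (γ ^ 2)⁻¹ * S ≠ 0)] at heq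
        linarith [heq]
      have hcancel : γ ^ 2 * (γ ^ 2)⁻¹ = 1 := mul_inv_cancel₀ (by positivity)
      have key : XB * S = γ * XA := by
        linear_combination γ * e - XB * S * hcancel
      have h4 : γ * XA ≤ XB * r2 := by nlinarith [key, hShi, hXB]
      have h5 : γ = γ * XA / XA := by field_simp
      rw [h5, hM_def]
      calc γ * XA / XA ≤ XB * r2 / XA := (div_le_div_iff_of_pos_right hXA).mpr h4
        _ = r2 * (XB / XA) := by ring
  -- sum decompositions
  have hM2ge1 : 1 ≤ M ^ 2 := by nlinarith
  have hγ2M : γ ^ 2 ≤ M ^ 2 := by nlinarith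
  have hcg2 : c ^ 2 ≤ γ ^ 2 := by nlinarith
  have hinvM : (M ^ 2)⁻¹ ≤ (γ ^ 2)⁻¹ := by
    apply inv_anti₀ (by positivity) hγ2M
  have hinvr : (γ ^ 2)⁻¹ ≤ r2 ^ 2 := by
    have hgr : 1 ≤ γ * r2 := by nlinarith
    have h6 : 1 ≤ (γ * r2) ^ 2 := by nlinarith
    have h7 : γ ^ 2 * (γ ^ 2)⁻¹ = 1 := mul_inv_cancel₀ (by positivity)
    have h8 : (0:ℝ) ≤ (γ ^ 2)⁻¹ := by positivity
    nlinarith [mul_le_mul_of_nonneg_right h6 h8]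
  have hNlo : c ^ 3 ≤ γ ^ 2 * (∑ i ∈ OmegaA wA wB γ, (nv wB i) ^ 2 / nv wA i)
      + ∑ i ∈ (OmegaA wA wB γ)ᶜ, nv wA i := by
    have e1 : ∑ i ∈ OmegaA wA wB γ, c ^ 3 * nv wB i
        ≤ γ ^ 2 * ∑ i ∈ OmegaA wA wB γ, (nv wB i) ^ 2 / nv wA i := by
      rw [Finset.mul_sum]
      refine Finset.sum_le_sum fun i _ => ?_
      have := mul_le_mul hcg2 (t1 i) (mul_nonneg hc.le (hvB i).le) (sq_nonneg γ)
      linarith [this]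
    have e2 : ∑ i ∈ (OmegaA wA wB γ)ᶜ, c ^ 3 * nv wB i
        ≤ ∑ i ∈ (OmegaA wA wB γ)ᶜ, nv wA i := by
      refine Finset.sum_le_sum fun i _ => ?_
      have hcc : 0 ≤ (c * (1 - c) * (1 + c)) := by nlinarith
      nlinarith [h1' i, (hvB i).le, hcc]
    have e3 : ∑ i ∈ OmegaA wA wB γ, c ^ 3 * nv wB i
        + ∑ i ∈ (OmegaA wA wB γ)ᶜ, c ^ 3 * nv wB i = c ^ 3 := by
      rw [Finset.sum_add_sum_compl, ← Finset.mul_sum, hsumB, mul_one]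
    linarith [e1, e2, e3]
  have hNhi : γ ^ 2 * (∑ i ∈ OmegaA wA wB γ, (nv wB i) ^ 2 / nv wA i)
      + ∑ i ∈ (OmegaA wA wB γ)ᶜ, nv wA i ≤ M ^ 2 * r2 := by
    have e1 : γ ^ 2 * ∑ i ∈ OmegaA wA wB γ, (nv wB i) ^ 2 / nv wA i
        ≤ ∑ i ∈ OmegaA wA wB γ, M ^ 2 * r2 * nv wB i := by
      rw [Finset.mul_sum]
      refine Finset.sum_le_sum fun i _ => ?_
      have := mul_le_mul hγ2M (t2 i) (div_nonneg (sq_nonneg _) (hvA i).le) (sq_nonneg M)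
      linarith [this]
    have e2 : ∑ i ∈ (OmegaA wA wB γ)ᶜ, nv wA i
        ≤ ∑ i ∈ (OmegaA wA wB γ)ᶜ, M ^ 2 * r2 * nv wB i := by
      refine Finset.sum_le_sum fun i _ => ?_
      nlinarith [h1 i, (hvB i).le, mul_nonneg (sub_nonneg.mpr hM2ge1) (mul_nonneg hr2.le (hvB i).le)]
    have e3 : ∑ i ∈ OmegaA wA wB γ, M ^ 2 * r2 * nv wB i
        + ∑ i ∈ (OmegaA wA wB γ)ᶜ, M ^ 2 * r2 * nv wB i = M ^ 2 * r2 := by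
      rw [Finset.sum_add_sum_compl, ← Finset.mul_sum, hsumB, mul_one]
    linarith [e1, e2, e3]
  have hDlo : c / M ^ 2 ≤ (∑ i ∈ OmegaA wA wB γ, nv wB i)
      + (γ ^ 2)⁻¹ * ∑ i ∈ (OmegaA wA wB γ)ᶜ, (nv wA i) ^ 2 / nv wB i := by
    have hcM : c / M ^ 2 ≤ c := div_le_self hc.le hM2ge1
    have e1 : ∑ i ∈ OmegaA wA wB γ, c / M ^ 2 * nv wA i
        ≤ ∑ i ∈ OmegaA wA wB γ, nv wB i := by
      refine Finset.sum_le_sum fun i _ => ?_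
      have := mul_le_mul_of_nonneg_right hcM (hvA i).le
      linarith [h2' i, this]
    have e2 : ∑ i ∈ (OmegaA wA wB γ)ᶜ, c / M ^ 2 * nv wA i
        ≤ (γ ^ 2)⁻¹ * ∑ i ∈ (OmegaA wA wB γ)ᶜ, (nv wA i) ^ 2 / nv wB i := by
      rw [Finset.mul_sum]
      refine Finset.sum_le_sum fun i _ => ?_
      have h9 := mul_le_mul hinvM (t3 i) (mul_nonneg hc.le (hvA i).le) (by positivity)
      have h10 : (M ^ 2)⁻¹ * (c * nv wA i) = c / M ^ 2 * nv wA i := by ring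
      linarith [h9, h10.ge, h10.le]
    have e3 : ∑ i ∈ OmegaA wA wB γ, c / M ^ 2 * nv wA i
        + ∑ i ∈ (OmegaA wA wB γ)ᶜ, c / M ^ 2 * nv wA i = c / M ^ 2 := by
      rw [Finset.sum_add_sum_compl, ← Finset.mul_sum, hsumA, mul_one]
    linarith [e1, e2, e3]
  have hDhi : (∑ i ∈ OmegaA wA wB γ, nv wB i)
      + (γ ^ 2)⁻¹ * ∑ i ∈ (OmegaA wA wB γ)ᶜ, (nv wA i) ^ 2 / nv wB i ≤ r2 ^ 3 := by
    have e1 : ∑ i ∈ OmegaA wA wB γ, nv wB i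
        ≤ ∑ i ∈ OmegaA wA wB γ, r2 ^ 3 * nv wA i := by
      refine Finset.sum_le_sum fun i _ => ?_
      nlinarith [h2 i, (hvA i).le, mul_nonneg (sub_nonneg.mpr (by nlinarith : (1:ℝ) ≤ r2 ^ 2)) (mul_nonneg hr2.le (hvA i).le)]
    have e2 : (γ ^ 2)⁻¹ * ∑ i ∈ (OmegaA wA wB γ)ᶜ, (nv wA i) ^ 2 / nv wB i
        ≤ ∑ i ∈ (OmegaA wA wB γ)ᶜ, r2 ^ 3 * nv wA i := by
      rw [Finset.mul_sum]
      refine Finset.sum_le_sum fun i _ => ?_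
      have h9 := mul_le_mul hinvr (t4 i) (div_nonneg (sq_nonneg _) (hvB i).le) (sq_nonneg r2)
      linarith [h9]
    have e3 : ∑ i ∈ OmegaA wA wB γ, r2 ^ 3 * nv wA i
        + ∑ i ∈ (OmegaA wA wB γ)ᶜ, r2 ^ 3 * nv wA i = r2 ^ 3 := by
      rw [Finset.sum_add_sum_compl, ← Finset.mul_sum, hsumA, mul_one]
    linarith [e1, e2, e3]
  have eA : lamA XB wA wB γ = (γ ^ 2 * ∑ i ∈ OmegaA wA wB γ, (nv wB i) ^ 2 / nv wA i
      + ∑ i ∈ (OmegaA wA wB γ)ᶜ, nv wA i) / (2 * XB) := by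
    unfold lamA; ring
  have eB : lamB XA wA wB γ = ((∑ i ∈ OmegaA wA wB γ, nv wB i)
      + (γ ^ 2)⁻¹ * ∑ i ∈ (OmegaA wA wB γ)ᶜ, (nv wA i) ^ 2 / nv wB i) / (2 * XA) := by
    unfold lamB; ring
  have h2XB : (0:ℝ) < 2 * XB := by positivity
  have h2XA : (0:ℝ) < 2 * XA := by positivity
  refine ⟨le_trans (min_le_right _ _) hγc, ?_, ?_, ?_, ?_, ?_⟩
  · -- γ ≤ γhi
    have hq1 : 1 ≤ (whi / wlo) ^ 2 := by
      have h0 : 1 ≤ whi / wlo := (one_le_div hwlo).mpr hw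
      nlinarith only [h0]
    have hMle : M ≤ XB / XA * (whi / wlo) ^ 4 := by
      rw [hM_def, hr2_def]
      linarith only [mul_nonneg (mul_nonneg (div_pos hXB hXA).le (sq_nonneg (whi / wlo))) (sub_nonneg.mpr hq1)]
    exact le_trans hγM hMle
  · -- ldlo ≤ lamA
    refine le_trans (min_le_left _ _) ?_
    rw [eA]
    exact (div_le_div_iff_of_pos_right h2XB).mpr hNlo
  · -- lamA ≤ ldhi
    refine le_trans ?_ (le_max_left _ _)
    rw [eA]
    exact (div_le_div_iff_of_pos_right h2XB).mpr hNhi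
  · -- ldlo ≤ lamB
    refine le_trans (min_le_right _ _) ?_
    rw [eB]
    exact (div_le_div_iff_of_pos_right h2XA).mpr hDlo
  · -- lamB ≤ ldhi
    refine le_trans ?_ (le_max_right _ _)
    rw [eB]
    exact (div_le_div_iff_of_pos_right h2XA).mpr hDhi
end

section
/- For any Blotto data and any positive solution γ* of Equation (2), the budget identities hold: X_A = Σ_{i∈Ω_A(γ*)} v^B_i/(2λ*_B) + Σ_{i∉Ω_A(γ*)} (v^A_i/λ*_A)² · λ*_B/(2 v^B_i) and X_B = Σ_{i∈Ω_A(γ*)} (v^B_i/λ*_B)² · λ*_A/(2 v^A_i) + Σ_{i∉Ω_A(γ*)} v^A_i/(2λ*_A). (These are the identities X_A = Σ_i E[A*_i] and X_B = Σ_i E[B*_i], where E[A*_i] and E[B*_i] are the means of the uniform-type distributions.) -/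
open Finset

/-- Budget identities: X_A = Σ E[A*_i] and X_B = Σ E[B*_i]. -/
theorem stmt3 (n : ℕ) (hn : 1 ≤ n) (XA XB : ℝ) (hXA : 0 < XA) (hXAB : XA ≤ XB)
    (wA wB : Fin n → ℝ) (hwA : ∀ i, 0 < wA i) (hwB : ∀ i, 0 < wB i)
    (γ : ℝ) (hγ : 0 < γ) (heq : Eq2 XA XB wA wB γ) :
    XA = ∑ i ∈ OmegaA wA wB γ, nv wB i / (2 * lamB XA wA wB γ)
          + ∑ i ∈ (OmegaA wA wB γ)ᶜ,
              (nv wA i / lamA XB wA wB γ) ^ 2 * (lamB XA wA wB γ / (2 * nv wB i)) ∧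
    XB = ∑ i ∈ OmegaA wA wB γ,
              (nv wB i / lamB XA wA wB γ) ^ 2 * (lamA XB wA wB γ / (2 * nv wA i))
          + ∑ i ∈ (OmegaA wA wB γ)ᶜ, nv wA i / (2 * lamA XB wA wB γ) := by
  classical
  have hne : (Finset.univ : Finset (Fin n)).Nonempty := by
    haveI : NeZero n := ⟨by omega⟩
    exact Finset.univ_nonempty
  have hXB : 0 < XB := lt_of_lt_of_le hXA hXAB
  have hsA : 0 < ∑ j, wA j := Finset.sum_pos (fun i _ => hwA i) hne
  have hsB : 0 < ∑ j, wB j := Finset.sum_pos (fun i _ => hwB i) hne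
  have hvA : ∀ i, 0 < nv wA i := fun i => div_pos (hwA i) hsA
  have hvB : ∀ i, 0 < nv wB i := fun i => div_pos (hwB i) hsB
  set Ω := OmegaA wA wB γ with hΩ
  set S1 := ∑ i ∈ Ω, (nv wB i) ^ 2 / nv wA i with hS1
  set S2 := ∑ i ∈ Ωᶜ, nv wA i with hS2
  set T1 := ∑ i ∈ Ω, nv wB i with hT1
  set T2 := ∑ i ∈ Ωᶜ, (nv wA i) ^ 2 / nv wB i with hT2
  have hS1n : 0 ≤ S1 := Finset.sum_nonneg fun i _ => le_of_lt (div_pos (pow_pos (hvB i) 2) (hvA i))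
  have hS2n : 0 ≤ S2 := Finset.sum_nonneg fun i _ => le_of_lt (hvA i)
  have hT1n : 0 ≤ T1 := Finset.sum_nonneg fun i _ => le_of_lt (hvB i)
  have hT2n : 0 ≤ T2 := Finset.sum_nonneg fun i _ => le_of_lt (div_pos (pow_pos (hvA i) 2) (hvB i))
  have hcase : Ω.Nonempty ∨ Ωᶜ.Nonempty := by
    by_cases h : Ω.Nonempty
    · exact Or.inl h
    · right
      rw [Finset.not_nonempty_iff_eq_empty] at h
      rw [h, Finset.compl_empty]
      exact hne
  have hN : 0 < γ ^ 2 * S1 + S2 := by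
    rcases hcase with h | h
    · have : 0 < S1 := Finset.sum_pos (fun i _ => div_pos (pow_pos (hvB i) 2) (hvA i)) h
      nlinarith [sq_nonneg γ, pow_pos hγ 2]
    · have : 0 < S2 := Finset.sum_pos (fun i _ => hvA i) h
      nlinarith [pow_pos hγ 2]
  have hD : 0 < T1 + (γ ^ 2)⁻¹ * T2 := by
    rcases hcase with h | h
    · have : 0 < T1 := Finset.sum_pos (fun i _ => hvB i) h
      positivity
    · have h2 : 0 < T2 := Finset.sum_pos (fun i _ => div_pos (pow_pos (hvA i) 2) (hvB i)) h
      have : 0 < (γ ^ 2)⁻¹ * T2 := mul_pos (inv_pos.mpr (pow_pos hγ 2)) h2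
      linarith
  set lA := lamA XB wA wB γ with hlA
  set lB := lamB XA wA wB γ with hlB
  have hlAval : lA = (γ ^ 2 * S1 + S2) / (2 * XB) := by
    rw [hlA]; unfold lamA
    rw [← hΩ, ← hS1, ← hS2]; ring
  have hlBval : lB = (T1 + (γ ^ 2)⁻¹ * T2) / (2 * XA) := by
    rw [hlB]; unfold lamB
    rw [← hΩ, ← hT1, ← hT2]; ring
  have hlApos : 0 < lA := by rw [hlAval]; exact div_pos hN (by positivity)
  have hlBpos : 0 < lB := by rw [hlBval]; exact div_pos hD (by positivity)
  -- key relation from Eq2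
  have heq' : XB * γ * (T1 + (γ ^ 2)⁻¹ * T2) = XA * (γ ^ 2 * S1 + S2) := by
    unfold Eq2 at heq
    rw [← hΩ, ← hS1, ← hS2, ← hT1, ← hT2] at heq
    rw [div_eq_div_iff (ne_of_gt hXA) (ne_of_gt hD)] at heq
    linarith
  have hkey : lA = γ * lB := by
    rw [hlAval, hlBval, mul_div_assoc']
    rw [div_eq_div_iff (by positivity : (2:ℝ) * XB ≠ 0) (by positivity : (2:ℝ) * XA ≠ 0)]
    linear_combination (-2 : ℝ) * heq'
  -- rewrite the sums
  have e1 : ∑ i ∈ Ω, nv wB i / (2 * lB) = T1 / (2 * lB) := by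
    rw [hT1, Finset.sum_div]
  have e2 : ∑ i ∈ Ωᶜ, (nv wA i / lA) ^ 2 * (lB / (2 * nv wB i))
      = T2 * (lB / (2 * lA ^ 2)) := by
    rw [hT2, Finset.sum_mul]
    exact Finset.sum_congr rfl fun i _ => by ring
  have e3 : ∑ i ∈ Ω, (nv wB i / lB) ^ 2 * (lA / (2 * nv wA i))
      = S1 * (lA / (2 * lB ^ 2)) := by
    rw [hS1, Finset.sum_mul]
    exact Finset.sum_congr rfl fun i _ => by ring
  have e4 : ∑ i ∈ Ωᶜ, nv wA i / (2 * lA) = S2 / (2 * lA) := by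
    rw [hS2, Finset.sum_div]
  have hγne : γ ≠ 0 := ne_of_gt hγ
  have hγ2 : (γ : ℝ) ^ 2 ≠ 0 := by positivity
  have hlBne : lB ≠ 0 := ne_of_gt hlBpos
  have hlAne : lA ≠ 0 := ne_of_gt hlApos
  have h2XAlB : 2 * XA * lB = T1 + (γ ^ 2)⁻¹ * T2 := by
    rw [hlBval, mul_comm, div_mul_cancel₀ _ (by positivity : (2:ℝ) * XA ≠ 0)]
  have h2XBlA : 2 * XB * lA = γ ^ 2 * S1 + S2 := by
    rw [hlAval, mul_comm, div_mul_cancel₀ _ (by positivity : (2:ℝ) * XB ≠ 0)]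
  clear_value lA lB
  constructor
  · rw [e1, e2, hkey]
    have h : T1 / (2 * lB) + T2 * (lB / (2 * (γ * lB) ^ 2))
        = (T1 + (γ ^ 2)⁻¹ * T2) / (2 * lB) := by
      field_simp
    rw [h, ← h2XAlB]
    field_simp
  · rw [e3, e4, hkey]
    have h : S1 * (γ * lB / (2 * lB ^ 2)) + S2 / (2 * (γ * lB))
        = (γ ^ 2 * S1 + S2) / (2 * (γ * lB)) := by
      field_simp
    rw [h, ← hkey, ← h2XBlA]
    field_simp
end

section
/- For any Blotto data, any positive solution γ* of Equation (2) and every i ∈ {1,…,n}: if i ∈ Ω_A(γ*) then v^B_i/λ*_B ≤ 2X_B, and if i ∉ Ω_A(γ*) then v^A_i/λ*_A ≤ 2X_B. Consequently the uniform-type CDFs satisfy F_{A*_i}(2X_B) = 1 and F_{B*_i}(2X_B) = 1 for every i, i.e. any random variable with distribution F_{A*_i} or F_{B*_i} is at most 2X_B almost surely. -/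
open Finset

/-- The uniform-type CDF `F_{A*_i}`. -/
noncomputable def FAstar {n : ℕ} (XA XB : ℝ) (wA wB : Fin n → ℝ) (γ : ℝ) (i : Fin n)
    (x : ℝ) : ℝ :=
  if x < 0 then 0
  else if i ∈ OmegaA wA wB γ then
    min (x * lamB XA wA wB γ / nv wB i) 1
  else
    min (1 - nv wA i * lamB XA wA wB γ / (nv wB i * lamA XB wA wB γ)
          + x * lamB XA wA wB γ / nv wB i) 1

/-- The uniform-type CDF `F_{B*_i}`. -/
noncomputable def FBstar {n : ℕ} (XA XB : ℝ) (wA wB : Fin n → ℝ) (γ : ℝ) (i : Fin n)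
    (x : ℝ) : ℝ :=
  if x < 0 then 0
  else if i ∈ OmegaA wA wB γ then
    min (1 - nv wB i * lamA XB wA wB γ / (nv wA i * lamB XA wA wB γ)
          + x * lamA XB wA wB γ / nv wA i) 1
  else
    min (x * lamA XB wA wB γ / nv wA i) 1

set_option maxHeartbeats 2000000 in
/-- The supports of the uniform-type distributions are contained in [0, 2X_B]. -/
theorem stmt4 (n : ℕ) (hn : 1 ≤ n) (XA XB : ℝ) (hXA : 0 < XA) (hXAB : XA ≤ XB)
    (wA wB : Fin n → ℝ) (hwA : ∀ i, 0 < wA i) (hwB : ∀ i, 0 < wB i)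
    (γ : ℝ) (hγ : 0 < γ) (heq : Eq2 XA XB wA wB γ) :
    ∀ i : Fin n,
      (i ∈ OmegaA wA wB γ → nv wB i / lamB XA wA wB γ ≤ 2 * XB) ∧
      (i ∉ OmegaA wA wB γ → nv wA i / lamA XB wA wB γ ≤ 2 * XB) ∧
      FAstar XA XB wA wB γ i (2 * XB) = 1 ∧
      FBstar XA XB wA wB γ i (2 * XB) = 1 := by
  haveI : Nonempty (Fin n) := ⟨⟨0, hn⟩⟩
  have hSA : 0 < ∑ j, wA j := Finset.sum_pos (fun i _ => hwA i) Finset.univ_nonempty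
  have hSB : 0 < ∑ j, wB j := Finset.sum_pos (fun i _ => hwB i) Finset.univ_nonempty
  have hvA : ∀ i, 0 < nv wA i := fun i => div_pos (hwA i) hSA
  have hvB : ∀ i, 0 < nv wB i := fun i => div_pos (hwB i) hSB
  have hγ2 : (0:ℝ) < γ ^ 2 := pow_pos hγ 2
  have hXB : 0 < XB := lt_of_lt_of_le hXA hXAB
  have hS1n : 0 ≤ ∑ i ∈ OmegaA wA wB γ, (nv wB i) ^ 2 / nv wA i :=
    Finset.sum_nonneg fun i _ => le_of_lt (div_pos (pow_pos (hvB i) 2) (hvA i))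
  have hS2n : 0 ≤ ∑ i ∈ (OmegaA wA wB γ)ᶜ, nv wA i :=
    Finset.sum_nonneg fun i _ => (hvA i).le
  have hT1n : 0 ≤ ∑ i ∈ OmegaA wA wB γ, nv wB i :=
    Finset.sum_nonneg fun i _ => (hvB i).le
  have hT2n : 0 ≤ ∑ i ∈ (OmegaA wA wB γ)ᶜ, (nv wA i) ^ 2 / nv wB i :=
    Finset.sum_nonneg fun i _ => le_of_lt (div_pos (pow_pos (hvA i) 2) (hvB i))
  have hlA0 : 0 ≤ lamA XB wA wB γ := by
    unfold lamA
    have h1 : 0 ≤ γ ^ 2 / (2 * XB) := le_of_lt (div_pos hγ2 (by linarith))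
    have h2 : 0 ≤ 1 / (2 * XB) := le_of_lt (one_div_pos.mpr (by linarith))
    nlinarith [mul_nonneg h1 hS1n, mul_nonneg h2 hS2n]
  have hlB0 : 0 ≤ lamB XA wA wB γ := by
    unfold lamB
    have h1 : 0 ≤ 1 / (2 * XA) := le_of_lt (one_div_pos.mpr (by linarith))
    have h2 : 0 ≤ 1 / (2 * γ ^ 2 * XA) := le_of_lt (one_div_pos.mpr (by nlinarith))
    nlinarith [mul_nonneg h1 hT1n, mul_nonneg h2 hT2n]
  have hlApos : 0 < lamA XB wA wB γ := by
    rcases Finset.eq_empty_or_nonempty (OmegaA wA wB γ) with h | h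
    · have hcompl : (OmegaA wA wB γ)ᶜ = Finset.univ := by rw [h]; simp
      have hS2p : 0 < ∑ i ∈ (OmegaA wA wB γ)ᶜ, nv wA i := by
        rw [hcompl]; exact Finset.sum_pos (fun i _ => hvA i) Finset.univ_nonempty
      unfold lamA
      have h1 : 0 ≤ γ ^ 2 / (2 * XB) := le_of_lt (div_pos hγ2 (by linarith))
      have h2 : 0 < 1 / (2 * XB) := one_div_pos.mpr (by linarith)
      nlinarith [mul_nonneg h1 hS1n, mul_pos h2 hS2p]
    · have hS1p : 0 < ∑ i ∈ OmegaA wA wB γ, (nv wB i) ^ 2 / nv wA i :=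
        Finset.sum_pos (fun i _ => div_pos (pow_pos (hvB i) 2) (hvA i)) h
      unfold lamA
      have h1 : 0 < γ ^ 2 / (2 * XB) := div_pos hγ2 (by linarith)
      have h2 : 0 ≤ 1 / (2 * XB) := le_of_lt (one_div_pos.mpr (by linarith))
      nlinarith [mul_pos h1 hS1p, mul_nonneg h2 hS2n]
  have hlBpos : 0 < lamB XA wA wB γ := by
    rcases Finset.eq_empty_or_nonempty (OmegaA wA wB γ) with h | h
    · have hcompl : (OmegaA wA wB γ)ᶜ = Finset.univ := by rw [h]; simp
      have hT2p : 0 < ∑ i ∈ (OmegaA wA wB γ)ᶜ, (nv wA i) ^ 2 / nv wB i := by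
        rw [hcompl]
        exact Finset.sum_pos (fun i _ => div_pos (pow_pos (hvA i) 2) (hvB i)) Finset.univ_nonempty
      unfold lamB
      have h1 : 0 ≤ 1 / (2 * XA) := le_of_lt (one_div_pos.mpr (by linarith))
      have h2 : 0 < 1 / (2 * γ ^ 2 * XA) := one_div_pos.mpr (by nlinarith)
      nlinarith [mul_nonneg h1 hT1n, mul_pos h2 hT2p]
    · have hT1p : 0 < ∑ i ∈ OmegaA wA wB γ, nv wB i :=
        Finset.sum_pos (fun i _ => hvB i) h
      unfold lamB
      have h1 : 0 < 1 / (2 * XA) := one_div_pos.mpr (by linarith)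
      have h2 : 0 ≤ 1 / (2 * γ ^ 2 * XA) := le_of_lt (one_div_pos.mpr (by nlinarith))
      nlinarith [mul_pos h1 hT1p, mul_nonneg h2 hT2n]
  -- the two key per-i inequalities
  have keyB : ∀ i, i ∈ OmegaA wA wB γ → nv wB i ≤ 2 * XB * lamB XA wA wB γ := by
    intro i hi
    have hs : nv wB i ≤ ∑ j ∈ OmegaA wA wB γ, nv wB j :=
      Finset.single_le_sum (fun j _ => (hvB j).le) hi
    have e : 2 * XA * lamB XA wA wB γ
        = (∑ j ∈ OmegaA wA wB γ, nv wB j)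
          + (∑ j ∈ (OmegaA wA wB γ)ᶜ, (nv wA j) ^ 2 / nv wB j) / γ ^ 2 := by
      unfold lamB
      field_simp
      try ring
    have h2 : 0 ≤ (∑ j ∈ (OmegaA wA wB γ)ᶜ, (nv wA j) ^ 2 / nv wB j) / γ ^ 2 :=
      div_nonneg hT2n hγ2.le
    have step1 : nv wB i ≤ 2 * XA * lamB XA wA wB γ := by rw [e]; linarith
    have step2 : 2 * XA * lamB XA wA wB γ ≤ 2 * XB * lamB XA wA wB γ :=
      mul_le_mul_of_nonneg_right (by linarith) hlB0
    linarith
  have keyA : ∀ i, i ∉ OmegaA wA wB γ → nv wA i ≤ 2 * XB * lamA XB wA wB γ := by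
    intro i hi
    have hi' : i ∈ (OmegaA wA wB γ)ᶜ := Finset.mem_compl.mpr hi
    have hs : nv wA i ≤ ∑ j ∈ (OmegaA wA wB γ)ᶜ, nv wA j :=
      Finset.single_le_sum (fun j _ => (hvA j).le) hi'
    have e : 2 * XB * lamA XB wA wB γ
        = γ ^ 2 * (∑ j ∈ OmegaA wA wB γ, (nv wB j) ^ 2 / nv wA j)
          + ∑ j ∈ (OmegaA wA wB γ)ᶜ, nv wA j := by
      unfold lamA
      field_simp
      try ring
    have h1 : 0 ≤ γ ^ 2 * ∑ j ∈ OmegaA wA wB γ, (nv wB j) ^ 2 / nv wA j :=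
      mul_nonneg hγ2.le hS1n
    linarith [hs, h1, e]
  intro i
  have hx : ¬ (2 * XB < 0) := by push_neg; linarith
  refine ⟨?_, ?_, ?_, ?_⟩
  · intro hi
    rw [div_le_iff₀ hlBpos]
    exact keyB i hi
  · intro hi
    rw [div_le_iff₀ hlApos]
    exact keyA i hi
  · unfold FAstar
    rw [if_neg hx]
    by_cases hi : i ∈ OmegaA wA wB γ
    · rw [if_pos hi]
      refine min_eq_right ?_
      rw [le_div_iff₀ (hvB i), one_mul]
      exact keyB i hi
    · rw [if_neg hi]
      refine min_eq_right ?_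
      have h1 := keyA i hi
      have hprod : 0 < nv wB i * lamA XB wA wB γ := mul_pos (hvB i) hlApos
      have key : nv wA i * lamB XA wA wB γ / (nv wB i * lamA XB wA wB γ)
          ≤ 2 * XB * lamB XA wA wB γ / nv wB i := by
        rw [div_le_div_iff₀ hprod (hvB i)]
        nlinarith [mul_nonneg hlB0 (hvB i).le]
      linarith
  · unfold FBstar
    rw [if_neg hx]
    by_cases hi : i ∈ OmegaA wA wB γ
    · rw [if_pos hi]
      refine min_eq_right ?_
      have h1 := keyB i hi
      have hprod : 0 < nv wA i * lamB XA wA wB γ := mul_pos (hvA i) hlBpos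
      have key : nv wB i * lamA XB wA wB γ / (nv wA i * lamB XA wA wB γ)
          ≤ 2 * XB * lamA XB wA wB γ / nv wA i := by
        rw [div_le_div_iff₀ hprod (hvA i)]
        nlinarith [mul_nonneg hlA0 (hvA i).le]
      linarith
    · rw [if_neg hi]
      refine min_eq_right ?_
      rw [le_div_iff₀ (hvA i), one_mul]
      exact keyA i hi
end

section
/- Let α ∈ (0,1), R > 0 and 0 < ε < min{α, 1−α}. For all x, y* ≥ 0, if |ν^R_A(x, y*) − β_A(x, y*)| ≥ ε (where β_A is the Blotto function with tie parameter α), then x ≠ y*; moreover if x < y* then y* − x ≤ (1/R)·ln((1−ε)α/(ε(1−α))), and if x > y* then x − y* ≤ (1/R)·ln((1−ε)(1−α)/(εα)). In particular |x − y*| ≤ (1/R)·ln( ((1−ε)/ε)·max{α/(1−α), (1−α)/α} ). -/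
/-- The logit-form CSF ν^R_A with tie parameter α. -/
noncomputable def nuA (R α x y : ℝ) : ℝ :=
  α * Real.exp (x * R) / (α * Real.exp (x * R) + (1 - α) * Real.exp (y * R))

/-- The Blotto (winner-takes-all) function β_A with tie parameter α. -/
noncomputable def betaA (α x y : ℝ) : ℝ :=
  if y < x then 1 else if x = y then α else 0

lemma key_exp (a b R u v : ℝ) (ha : 0 < a) (hb : 0 < b) (hR : 0 < R)
    (h : a * Real.exp (u * R) ≤ b * Real.exp (v * R)) :
    u - v ≤ (1 / R) * Real.log (b / a) := by
  have hc : 0 < b / a := div_pos hb ha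
  have he : Real.exp ((u - v) * R) ≤ b / a := by
    rw [sub_mul, Real.exp_sub, div_le_div_iff₀ (Real.exp_pos _) ha]
    nlinarith [Real.exp_pos (u * R), Real.exp_pos (v * R)]
  have ht : (u - v) * R ≤ Real.log (b / a) := (Real.le_log_iff_exp_le hc).mpr he
  have h2 : u - v ≤ Real.log (b / a) / R := (le_div_iff₀ hR).mpr ht
  have h3 : (1 / R) * Real.log (b / a) = Real.log (b / a) / R := by ring
  rw [h3]; exact h2

/-- Where the logit-form CSF differs from the Blotto function by at least ε,
the two allocations are close. -/
theorem stmt8 (α R ε : ℝ) (hα0 : 0 < α) (hα1 : α < 1) (hR : 0 < R)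
    (hε0 : 0 < ε) (hε : ε < min α (1 - α)) (x yst : ℝ) (hx : 0 ≤ x) (hy : 0 ≤ yst)
    (h : ε ≤ |nuA R α x yst - betaA α x yst|) :
    x ≠ yst ∧
    (x < yst → yst - x ≤ (1 / R) * Real.log ((1 - ε) * α / (ε * (1 - α)))) ∧
    (yst < x → x - yst ≤ (1 / R) * Real.log ((1 - ε) * (1 - α) / (ε * α))) ∧
    |x - yst| ≤ (1 / R) * Real.log ((1 - ε) / ε * max (α / (1 - α)) ((1 - α) / α)) := by
  have hεα : ε < α := lt_of_lt_of_le hε (min_le_left _ _)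
  have hεα' : ε < 1 - α := lt_of_lt_of_le hε (min_le_right _ _)
  have h1α : 0 < 1 - α := by linarith
  have h1ε : 0 < 1 - ε := by linarith
  have hEx : 0 < Real.exp (x * R) := Real.exp_pos _
  have hEy : 0 < Real.exp (yst * R) := Real.exp_pos _
  have hD : 0 < α * Real.exp (x * R) + (1 - α) * Real.exp (yst * R) := by positivity
  have hne : x ≠ yst := by
    intro heq
    have hnu : nuA R α x yst = α := by
      unfold nuA
      rw [heq]
      have hden : α * Real.exp (yst * R) + (1 - α) * Real.exp (yst * R)
          = Real.exp (yst * R) := by ring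
      rw [hden, mul_div_assoc, div_self (ne_of_gt hEy), mul_one]
    have hbeta : betaA α x yst = α := by
      unfold betaA
      rw [heq]
      simp
    rw [hnu, hbeta] at h
    simp at h
    linarith
  have hnonneg : 0 ≤ 1 / R := by positivity
  rcases lt_trichotomy x yst with hlt | heq | hgt
  · -- x < yst : beta = 0
    have hbeta : betaA α x yst = 0 := by
      unfold betaA
      rw [if_neg (not_lt.mpr hlt.le), if_neg hne]
    rw [hbeta, sub_zero] at h
    have hnupos : 0 < nuA R α x yst := by
      unfold nuA; positivity
    rw [abs_of_pos hnupos] at h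
    have hmul : ε * (α * Real.exp (x * R) + (1 - α) * Real.exp (yst * R))
        ≤ α * Real.exp (x * R) := by
      have := (le_div_iff₀ hD).mp h
      linarith
    have hkey : ε * (1 - α) * Real.exp (yst * R) ≤ (1 - ε) * α * Real.exp (x * R) := by
      nlinarith
    have hb1 : yst - x ≤ (1 / R) * Real.log (((1 - ε) * α) / (ε * (1 - α))) :=
      key_exp (ε * (1 - α)) ((1 - ε) * α) R yst x (by positivity) (by positivity) hR hkey
    refine ⟨hne, fun _ => hb1, fun hc => absurd hc (not_lt.mpr hlt.le), ?_⟩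
    have habs : |x - yst| = yst - x := by
      rw [abs_sub_comm]; exact abs_of_pos (by linarith)
    rw [habs]
    refine hb1.trans ?_
    apply mul_le_mul_of_nonneg_left _ hnonneg
    apply Real.log_le_log (by positivity)
    have h1 : (1 - ε) * α / (ε * (1 - α)) = (1 - ε) / ε * (α / (1 - α)) := by
      field_simp
    rw [h1]
    exact mul_le_mul_of_nonneg_left (le_max_left _ _) (by positivity)
  · exact absurd heq hne
  · -- yst < x : beta = 1
    have hbeta : betaA α x yst = 1 := by
      unfold betaA
      rw [if_pos hgt]
    rw [hbeta] at h
    have hle1 : nuA R α x yst ≤ 1 := by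
      unfold nuA
      rw [div_le_one hD]
      nlinarith
    rw [abs_sub_comm, abs_of_nonneg (by linarith)] at h
    have hdiv : nuA R α x yst ≤ 1 - ε := by linarith
    have hmul : α * Real.exp (x * R)
        ≤ (1 - ε) * (α * Real.exp (x * R) + (1 - α) * Real.exp (yst * R)) := by
      have := (div_le_iff₀ hD).mp hdiv
      linarith
    have hkey : ε * α * Real.exp (x * R) ≤ (1 - ε) * (1 - α) * Real.exp (yst * R) := by
      nlinarith
    have hb1 : x - yst ≤ (1 / R) * Real.log (((1 - ε) * (1 - α)) / (ε * α)) :=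
      key_exp (ε * α) ((1 - ε) * (1 - α)) R x yst (by positivity) (by positivity) hR hkey
    refine ⟨hne, fun hc => absurd hc (not_lt.mpr hgt.le), fun _ => hb1, ?_⟩
    have habs : |x - yst| = x - yst := abs_of_pos (by linarith)
    rw [habs]
    refine hb1.trans ?_
    apply mul_le_mul_of_nonneg_left _ hnonneg
    apply Real.log_le_log (by positivity)
    have h1 : (1 - ε) * (1 - α) / (ε * α) = (1 - ε) / ε * ((1 - α) / α) := by
      field_simp
    rw [h1]
    exact mul_le_mul_of_nonneg_left (le_max_right _ _) (by positivity)
end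

section
/- Given constants 0 < w̲ ≤ w̄, 0 < X_A ≤ X_B and α ∈ [0,1], there exists C*₀ > 0 (depending only on these constants) such that for every ε ∈ (0,1], every integer n ≥ C*₀ max{1, ln(1/ε)}, every Blotto data with n battlefields satisfying Assumption (A0), every positive solution γ* of Equation (2), and every pure strategy x^A of player A (x^A_i ≥ 0, Σ_i x^A_i ≤ X_A): if Σ_{i=1}^n v^A_i P(B^n_i ≤ x^A_i) ≤ Σ_{i=1}^n v^A_i E[P(B^n_i ≤ x) evaluated at x = A^n_i] + ε/2 (i.e. Σ_i v^A_i F_{B^n_i}(x^A_i) ≤ Σ_i v^A_i E[F_{B^n_i}(A^n_i)] + ε/2, where F_{B^n_i}(x) := P(B^n_i ≤ x)), then Π_A(x^A, IU_B) ≤ Π_A(IU_A, IU_B) + ε W_A. -/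
open Finset MeasureTheory

/-- The IU^γ* allocation to battlefield `i`: the draw `a i` normalized by the total
draw and scaled by the budget `X` (and `0` if the total draw is `0`). -/
noncomputable def IUalloc {n : ℕ} {Ω : Type*} (X : ℝ) (a : Fin n → Ω → ℝ)
    (i : Fin n) (ω : Ω) : ℝ :=
  if 0 < ∑ j, a j ω then a i ω * X / ∑ j, a j ω else 0

/-! Since `α ≤ 1`, the payoff of a pure allocation on battlefield `i` is at most `P(B_i ≤ x_i)`,
so the hypothesis bounds the pure payoff by `W_A (∑ v^A_i E[F_{B_i}(A_i)] + ε / 2)`. As `A_i` and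
`B_i` are independent, `E[F_{B_i}(A_i)] = P(B_i ≤ A_i)`, which is the mixed payoff
`α P(A_i = B_i) + P(B_i < A_i)` because ties have probability zero once there are at least two
battlefields (the constant `C₀ = 2` guarantees this). -/

open ProbabilityTheory

section RandomVariable

variable {Ω : Type*} [MeasurableSpace Ω] {P : Measure Ω} {ξ : Ω → ℝ}

lemma ae_nonneg_of_measure_le_eq_zero (h : ∀ x < 0, P {ω | ξ ω ≤ x} = 0) :
    ∀ᵐ ω ∂P, 0 ≤ ξ ω := by
  refine ae_iff.2 <| measure_mono_null (fun ω (hω : ¬ 0 ≤ ξ ω) => ?_) <|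
    measure_iUnion_null fun k : ℕ => h (-(1 / (k + 1))) (by simp only [neg_lt_zero]; positivity)
  obtain ⟨k, hk⟩ := exists_nat_one_div_lt (neg_pos.2 (not_le.1 hω))
  exact Set.mem_iUnion.2 ⟨k, by simp only [Set.mem_ofPred_eq]; linarith⟩

lemma ae_pos_of_measure_le_zero_eq_zero (h : P {ω | ξ ω ≤ 0} = 0) : ∀ᵐ ω ∂P, 0 < ξ ω := by
  simpa only [ae_iff, not_lt] using h

lemma measure_eq_eq_zero_of_continuousAt [IsProbabilityMeasure P] (hξ : Measurable ξ)
    {F : ℝ → ℝ} (hF : ∀ x, P {ω | ξ ω ≤ x} = ENNReal.ofReal (F x)) {t : ℝ}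
    (ht : ContinuousAt F t) : P {ω | ξ ω = t} = 0 := by
  have := Measure.isProbabilityMeasure_map (μ := P) hξ.aemeasurable
  have hcdf : ⇑(cdf (P.map ξ)) = fun x => max (F x) 0 := by
    funext x
    rw [cdf_eq_real, measureReal_def, Measure.map_apply hξ measurableSet_Iic]
    exact (congrArg ENNReal.toReal (hF x)).trans ENNReal.toReal_ofReal'
  have hcont : ContinuousWithinAt (cdf (P.map ξ)) (Set.Iic t) t := by
    rw [hcdf]
    exact (ht.sup continuousAt_const).continuousWithinAt
  calc P {ω | ξ ω = t} = P.map ξ {t} := (Measure.map_apply hξ (measurableSet_singleton t)).symm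
    _ = 0 := by
      rw [← measure_cdf (P.map ξ), StieltjesFunction.measure_singleton, hcont.leftLim_eq,
        sub_self, ENNReal.ofReal_zero]

lemma toReal_measure_le_eq_add [IsFiniteMeasure P] {f g : Ω → ℝ} (hf : Measurable f)
    (hg : Measurable g) :
    (P {ω | f ω ≤ g ω}).toReal = (P {ω | f ω < g ω}).toReal + (P {ω | f ω = g ω}).toReal := by
  rw [← ENNReal.toReal_add (measure_ne_top _ _) (measure_ne_top _ _),
    ← measure_union _ (measurableSet_eq_fun hf hg)]
  · simp only [← Set.ofPred_or, ← le_iff_lt_or_eq]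
  · exact Set.disjoint_left.2 fun ω (h₁ : f ω < g ω) (h₂ : f ω = g ω) => h₁.ne h₂

lemma mul_toReal_measure_eq_add_toReal_measure_lt_le [IsFiniteMeasure P] {α x : ℝ}
    (hα : α ≤ 1) (hξ : Measurable ξ) :
    α * (P {ω | ξ ω = x}).toReal + (P {ω | ξ ω < x}).toReal ≤ (P {ω | ξ ω ≤ x}).toReal := by
  rw [toReal_measure_le_eq_add hξ measurable_const]
  nlinarith [ENNReal.toReal_nonneg (a := P {ω | ξ ω = x})]

lemma measurable_measure_prodMk_mem {α β : Type*} [MeasurableSpace α] [MeasurableSpace β]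
    [IsFiniteMeasure P] {Y : Ω → β} {s : Set (α × β)} (hY : Measurable Y)
    (hs : MeasurableSet s) : Measurable fun x => P {ω | (x, Y ω) ∈ s} := by
  have h := measurable_measure_prodMk_left (ν := P.map Y) hs
  simp only [Measure.map_apply hY (measurable_prodMk_left hs)] at h
  exact h

end RandomVariable

namespace ProbabilityTheory

variable {Ω α β : Type*} [MeasurableSpace Ω] [MeasurableSpace α] [MeasurableSpace β]
  {P : Measure Ω}

lemma iIndepFun.indepFun_sumElim {ι κ : Type*} [Fintype ι] [Fintype κ] {f : ι → Ω → β}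
    {g : κ → Ω → β} (h : iIndepFun (Sum.elim f g) P) (hf : ∀ i, Measurable (f i))
    (hg : ∀ j, Measurable (g j)) : IndepFun (fun ω i => f i ω) (fun ω j => g j ω) P :=
  IndepFun.comp (φ := fun v i => v ⟨Sum.inl i, by simp⟩) (ψ := fun v j => v ⟨Sum.inr j, by simp⟩)
    (h.indepFun_finset _ _ (Finset.disjoint_map_inl_map_inr univ univ) (Sum.forall.2 ⟨hf, hg⟩))
    (measurable_pi_lambda _ fun _ => measurable_pi_apply _)
    (measurable_pi_lambda _ fun _ => measurable_pi_apply _)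

variable [IsFiniteMeasure P] {X : Ω → α} {Y : Ω → β} {s : Set (α × β)}

lemma IndepFun.lintegral_measure_prodMk_mem (hind : IndepFun X Y P) (hX : Measurable X)
    (hY : Measurable Y) (hs : MeasurableSet s) :
    ∫⁻ ω, P {ω' | (X ω, Y ω') ∈ s} ∂P = P {ω | (X ω, Y ω) ∈ s} := by
  have hsec : ∀ x, P {ω | (x, Y ω) ∈ s} = P.map Y (Prod.mk x ⁻¹' s) := fun x =>
    (Measure.map_apply hY (measurable_prodMk_left hs)).symm
  rw [← lintegral_map (measurable_measure_prodMk_mem hY hs) hX]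
  simp_rw [hsec]
  rw [← Measure.prod_apply hs, ← hind.map_prod_eq_prod_map_map hX.aemeasurable hY.aemeasurable,
    Measure.map_apply (hX.prodMk hY) hs]
  rfl

lemma IndepFun.integral_toReal_measure_prodMk_mem (hind : IndepFun X Y P) (hX : Measurable X)
    (hY : Measurable Y) (hs : MeasurableSet s) :
    ∫ ω, (P {ω' | (X ω, Y ω') ∈ s}).toReal ∂P = (P {ω | (X ω, Y ω) ∈ s}).toReal := by
  rw [integral_toReal (f := fun ω => P {ω' | (X ω, Y ω') ∈ s})
    ((measurable_measure_prodMk_mem hY hs).comp hX).aemeasurable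
    (ae_of_all _ fun _ => measure_lt_top _ _), hind.lintegral_measure_prodMk_mem hX hY hs]

/-- Ties can only occur at the countably many atoms of `Y`, all of which `X` almost surely
avoids. -/
lemma IndepFun.measure_eq_eq_zero {X Y : Ω → ℝ} (hind : IndepFun X Y P) (hX : Measurable X)
    (hY : Measurable Y) (h : ∀ t, P {ω | X ω = t} = 0 ∨ P {ω | Y ω = t} = 0) :
    P {ω | X ω = Y ω} = 0 := by
  set atoms := {t | 0 < P {ω | Y ω = t}}
  have hX_atoms : ∀ᵐ ω ∂P, X ω ∉ atoms := by
    refine ae_iff.2 <| measure_mono_null (fun ω (hω : ¬ X ω ∉ atoms) => ?_) <|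
      (measure_biUnion_null_iff (Measure.countable_meas_level_set_pos hY)).2
        fun t ht => (h t).resolve_right ht.ne'
    exact Set.mem_biUnion (not_not.1 hω) rfl
  change P {ω | (X ω, Y ω) ∈ {p : ℝ × ℝ | p.1 = p.2}} = 0
  rw [← hind.lintegral_measure_prodMk_mem hX hY
    (measurableSet_eq_fun measurable_fst measurable_snd)]
  refine (lintegral_congr_ae (hX_atoms.mono fun ω hω => ?_)).trans lintegral_zero
  simpa [atoms, eq_comm] using hω

end ProbabilityTheory

section IUalloc

variable {n : ℕ} {Ω : Type*} {X : ℝ} {b : Fin n → Ω → ℝ} {i : Fin n} {ω : Ω}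

lemma measurable_IUalloc [MeasurableSpace Ω] (hb : ∀ j, Measurable (b j)) :
    Measurable (IUalloc X b i) := by
  have hsum : Measurable fun ω => ∑ j, b j ω := Finset.measurable_sum _ fun j _ => hb j
  exact Measurable.ite (measurableSet_lt measurable_const hsum)
    (((hb i).mul_const X).div hsum) measurable_const

lemma IUalloc_pos (hX : 0 < X) (hb : ∀ j, 0 ≤ b j ω) (hbi : 0 < b i ω) :
    0 < IUalloc X b i ω := by
  have hsum : 0 < ∑ j, b j ω := hbi.trans_le (single_le_sum (fun j _ => hb j) (mem_univ i))
  rw [IUalloc, if_pos hsum]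
  positivity

lemma IUalloc_lt (hX : 0 < X) (hb : ∀ j, 0 ≤ b j ω) {j : Fin n} (hji : j ≠ i)
    (hbj : 0 < b j ω) : IUalloc X b i ω < X := by
  have hpair : b i ω + b j ω ≤ ∑ k, b k ω := by
    simpa [sum_pair hji.symm] using
      sum_le_sum_of_subset_of_nonneg (subset_univ {i, j}) fun k _ _ => hb k
  have hsum : 0 < ∑ k, b k ω := by linarith [hb i]
  rw [IUalloc, if_pos hsum, div_lt_iff₀ hsum]
  nlinarith

/-- Away from `0` and `X`, an atom of the allocation `b i * X / ∑ b` would force `b i` to sit on an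
atom of its own, at a point determined by the independent remainder `∑_{j ≠ i} b j`. -/
lemma measure_IUalloc_eq_eq_zero [MeasurableSpace Ω] {P : Measure Ω} [IsFiniteMeasure P]
    (hb : ∀ j, Measurable (b j)) (hind : IndepFun (∑ j ∈ univ.erase i, b j) (b i) P)
    (hatom : ∀ c ≠ 0, P {ω | b i ω = c} = 0) {t : ℝ} (ht0 : t ≠ 0) (htX : t ≠ X) :
    P {ω | IUalloc X b i ω = t} = 0 := by
  set S := ∑ j ∈ univ.erase i, b j
  have hS : Measurable S := by
    simpa only [S, ← Finset.sum_apply] using Finset.measurable_sum _ fun j _ => hb j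
  have hsub : {ω | IUalloc X b i ω = t}
      ⊆ {ω | (S ω, b i ω) ∈ {p : ℝ × ℝ | p.2 ≠ 0 ∧ p.2 = t * p.1 / (X - t)}} := by
    intro ω hω
    have hsplit : b i ω + S ω = ∑ j, b j ω := by simp [S, Finset.sum_apply]
    simp only [Set.mem_ofPred_eq, IUalloc] at hω ⊢
    split_ifs at hω with hpos
    · rw [div_eq_iff hpos.ne'] at hω
      refine ⟨fun hbi => ?_, ?_⟩
      · rw [hbi, zero_mul] at hω
        exact ht0 (by nlinarith)
      · rw [eq_div_iff (sub_ne_zero.2 htX.symm)]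
        linear_combination hω - t * hsplit
    · exact absurd hω.symm ht0
  refine measure_mono_null hsub ?_
  have hs : MeasurableSet {p : ℝ × ℝ | p.2 ≠ 0 ∧ p.2 = t * p.1 / (X - t)} :=
    (measurableSet_eq_fun measurable_snd measurable_const).compl.inter
      (measurableSet_eq_fun measurable_snd (by fun_prop))
  rw [← hind.lintegral_measure_prodMk_mem hS (hb i) hs]
  refine (lintegral_congr fun ω => ?_).trans lintegral_zero
  by_cases hc : t * S ω / (X - t) = 0
  · exact measure_mono_null (fun ω' hω' => hω'.1 (hω'.2.trans hc)) measure_empty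
  · exact measure_mono_null (fun ω' hω' => hω'.2) (hatom _ hc)

end IUalloc

section UniformCDF

variable {n : ℕ} {XA XB γ : ℝ} {wA wB : Fin n → ℝ} {i : Fin n} {x : ℝ}

lemma FAstar_of_neg (hx : x < 0) : FAstar XA XB wA wB γ i x = 0 := by
  simp [FAstar, hx]

lemma FBstar_of_neg (hx : x < 0) : FBstar XA XB wA wB γ i x = 0 := by
  simp [FBstar, hx]

lemma FAstar_zero_of_mem (hi : i ∈ OmegaA wA wB γ) : FAstar XA XB wA wB γ i 0 = 0 := by
  simp [FAstar, hi]

lemma FBstar_zero_of_notMem (hi : i ∉ OmegaA wA wB γ) : FBstar XA XB wA wB γ i 0 = 0 := by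
  simp [FBstar, hi]

lemma continuousAt_FBstar (hx : x ≠ 0) : ContinuousAt (FBstar XA XB wA wB γ i) x := by
  rcases hx.lt_or_gt with hx | hx
  · refine (continuousAt_const (y := (0 : ℝ))).congr ?_
    filter_upwards [Iio_mem_nhds hx] with y hy
    exact (FBstar_of_neg hy).symm
  · refine ContinuousAt.congr (f := fun y => if i ∈ OmegaA wA wB γ then
        min (1 - nv wB i * lamA XB wA wB γ / (nv wA i * lamB XA wA wB γ)
          + y * lamA XB wA wB γ / nv wA i) 1
      else min (y * lamA XB wA wB γ / nv wA i) 1) (by split_ifs <;> fun_prop) ?_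
    filter_upwards [Ioi_mem_nhds hx] with y hy
    simp [FBstar, not_lt.2 (Set.mem_Ioi.1 hy).le]

end UniformCDF

section Blotto

variable {n : ℕ} {XA XB γ : ℝ} {wA wB : Fin n → ℝ} {Ω : Type*} [MeasurableSpace Ω]
  {P : Measure Ω} {a b : Fin n → Ω → ℝ}

lemma sum_mul_eq_sum_mul_nv {w : Fin n → ℝ} (hw : ∑ j, w j ≠ 0) (c : Fin n → ℝ) :
    ∑ i, w i * c i = (∑ j, w j) * ∑ i, nv w i * c i := by
  rw [mul_sum]
  refine sum_congr rfl fun i _ => ?_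
  rw [nv]
  field_simp

lemma indepFun_IUalloc (ha : ∀ i, Measurable (a i)) (hb : ∀ i, Measurable (b i))
    (hindep : iIndepFun (Sum.elim a b) P) (i : Fin n) :
    IndepFun (IUalloc XA a i) (IUalloc XB b i) P :=
  (hindep.indepFun_sumElim ha hb).comp
    (measurable_IUalloc (b := fun j (v : Fin n → ℝ) => v j) measurable_pi_apply)
    (measurable_IUalloc (b := fun j (v : Fin n → ℝ) => v j) measurable_pi_apply)

lemma integral_toReal_measure_IUalloc_le_eq [IsFiniteMeasure P] (α : ℝ)
    (ha : ∀ i, Measurable (a i)) (hb : ∀ i, Measurable (b i))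
    (hindep : iIndepFun (Sum.elim a b) P) (i : Fin n)
    (hties : P {ω | IUalloc XA a i ω = IUalloc XB b i ω} = 0) :
    ∫ ω, (P {ω' | IUalloc XB b i ω' ≤ IUalloc XA a i ω}).toReal ∂P
      = α * (P {ω | IUalloc XA a i ω = IUalloc XB b i ω}).toReal
        + (P {ω | IUalloc XB b i ω < IUalloc XA a i ω}).toReal := by
  have hA : Measurable (IUalloc XA a i) := measurable_IUalloc ha
  have hB : Measurable (IUalloc XB b i) := measurable_IUalloc hb
  have hties' : P {ω | IUalloc XB b i ω = IUalloc XA a i ω} = 0 := by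
    simpa only [eq_comm] using hties
  refine ((indepFun_IUalloc ha hb hindep i).integral_toReal_measure_prodMk_mem
    (s := {p | p.2 ≤ p.1}) hA hB (measurableSet_le measurable_snd measurable_fst)).trans ?_
  simp only [Set.mem_ofPred_eq]
  rw [toReal_measure_le_eq_add hB hA, hties, hties']
  simp

/-- Ties at `0` are excluded because one of the two draws on battlefield `i` is a.s. positive,
and ties at `XB` because some other battlefield a.s. receives a positive share of one of the
budgets; elsewhere the allocation of player B has no atoms. -/
lemma measure_IUalloc_eq_IUalloc_eq_zero [IsProbabilityMeasure P] (hXA : 0 < XA)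
    (hXAB : XA ≤ XB) (hn : 1 < n) (ha : ∀ i, Measurable (a i)) (hb : ∀ i, Measurable (b i))
    (hindep : iIndepFun (Sum.elim a b) P)
    (hFa : ∀ i x, P {ω | a i ω ≤ x} = ENNReal.ofReal (FAstar XA XB wA wB γ i x))
    (hFb : ∀ i x, P {ω | b i ω ≤ x} = ENNReal.ofReal (FBstar XA XB wA wB γ i x)) (i : Fin n) :
    P {ω | IUalloc XA a i ω = IUalloc XB b i ω} = 0 := by
  have hXB : 0 < XB := hXA.trans_le hXAB
  have ha_nonneg : ∀ᵐ ω ∂P, ∀ j, 0 ≤ a j ω := ae_all_iff.2 fun j =>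
    ae_nonneg_of_measure_le_eq_zero fun x hx => by rw [hFa, FAstar_of_neg hx, ENNReal.ofReal_zero]
  have hb_nonneg : ∀ᵐ ω ∂P, ∀ j, 0 ≤ b j ω := ae_all_iff.2 fun j =>
    ae_nonneg_of_measure_le_eq_zero fun x hx => by rw [hFb, FBstar_of_neg hx, ENNReal.ofReal_zero]
  have ha_pos : ∀ j ∈ OmegaA wA wB γ, ∀ᵐ ω ∂P, 0 < a j ω := fun j hj =>
    ae_pos_of_measure_le_zero_eq_zero (by rw [hFa, FAstar_zero_of_mem hj, ENNReal.ofReal_zero])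
  have hb_pos : ∀ j ∉ OmegaA wA wB γ, ∀ᵐ ω ∂P, 0 < b j ω := fun j hj =>
    ae_pos_of_measure_le_zero_eq_zero (by rw [hFb, FBstar_zero_of_notMem hj, ENNReal.ofReal_zero])
  have null_of_ae_ne : ∀ {f : Ω → ℝ} {t : ℝ}, (∀ᵐ ω ∂P, f ω ≠ t) → P {ω | f ω = t} = 0 :=
    fun h => by simpa only [ae_iff, ne_eq, not_not] using h
  refine (indepFun_IUalloc ha hb hindep i).measure_eq_eq_zero (measurable_IUalloc ha)
    (measurable_IUalloc hb) fun t => ?_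
  obtain rfl | ht0 := eq_or_ne t 0
  · by_cases hi : i ∈ OmegaA wA wB γ
    · refine .inl (null_of_ae_ne ?_)
      filter_upwards [ha_nonneg, ha_pos i hi] with ω h₀ h₁ using (IUalloc_pos hXA h₀ h₁).ne'
    · refine .inr (null_of_ae_ne ?_)
      filter_upwards [hb_nonneg, hb_pos i hi] with ω h₀ h₁ using (IUalloc_pos hXB h₀ h₁).ne'
  obtain rfl | htX := eq_or_ne t XB
  · obtain ⟨j, hji⟩ := Fintype.exists_ne_of_one_lt_card (by simpa using hn) i
    by_cases hj : j ∈ OmegaA wA wB γ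
    · refine .inl (null_of_ae_ne ?_)
      filter_upwards [ha_nonneg, ha_pos j hj] with ω h₀ h₁ using
        ((IUalloc_lt hXA h₀ hji h₁).trans_le hXAB).ne
    · refine .inr (null_of_ae_ne ?_)
      filter_upwards [hb_nonneg, hb_pos j hj] with ω h₀ h₁ using (IUalloc_lt hXB h₀ hji h₁).ne
  exact .inr <| measure_IUalloc_eq_eq_zero hb
    ((hindep.precomp Sum.inr_injective).indepFun_finsetSum_of_notMem hb (notMem_erase i univ))
    (fun c hc => measure_eq_eq_zero_of_continuousAt (hb i) (hFb i) (continuousAt_FBstar hc))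
    ht0 htX

end Blotto

theorem stmt12_general (wlo whi XA XB α : ℝ) (hwlo : 0 < wlo)
    (hXA : 0 < XA) (hXAB : XA ≤ XB) (hα1 : α ≤ 1) :
    ∃ C₀ : ℝ, 0 < C₀ ∧
      ∀ ε : ℝ, 0 < ε → ε ≤ 1 →
      ∀ n : ℕ, 1 ≤ n → C₀ * max 1 (Real.log ε⁻¹) ≤ (n : ℝ) →
      ∀ (wA wB : Fin n → ℝ),
        (∀ i, wlo ≤ wA i ∧ wA i ≤ whi) → (∀ i, wlo ≤ wB i ∧ wB i ≤ whi) →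
      ∀ γ : ℝ, 0 < γ → Eq2 XA XB wA wB γ →
      ∀ (Ω : Type) (_ : MeasurableSpace Ω) (P : Measure Ω), IsProbabilityMeasure P →
      ∀ (a b : Fin n → Ω → ℝ),
        (∀ i, Measurable (a i)) → (∀ i, Measurable (b i)) →
        ProbabilityTheory.iIndepFun (Sum.elim a b) P →
        (∀ i x, P {ω | a i ω ≤ x} = ENNReal.ofReal (FAstar XA XB wA wB γ i x)) →
        (∀ i x, P {ω | b i ω ≤ x} = ENNReal.ofReal (FBstar XA XB wA wB γ i x)) →
      ∀ (xA : Fin n → ℝ), (∀ i, 0 ≤ xA i) → (∑ i, xA i ≤ XA) →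
      (∑ i, nv wA i * (P {ω | IUalloc XB b i ω ≤ xA i}).toReal
          ≤ (∑ i, nv wA i *
              ∫ ω, (P {ω' | IUalloc XB b i ω' ≤ IUalloc XA a i ω}).toReal ∂P) + ε / 2) →
      ∑ i, wA i * (α * (P {ω | IUalloc XB b i ω = xA i}).toReal
            + (P {ω | IUalloc XB b i ω < xA i}).toReal)
        ≤ (∑ i, wA i * (α * (P {ω | IUalloc XA a i ω = IUalloc XB b i ω}).toReal
            + (P {ω | IUalloc XB b i ω < IUalloc XA a i ω}).toReal))
          + ε * ∑ j, wA j := by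
  refine ⟨2, two_pos, fun ε hε _ n _ hnC wA wB hwA _ γ _ _ Ω _ P _ a b ha hb hindep hFa hFb
    xA _ _ hyp => ?_⟩
  have hn : 1 < n := by
    have : (2 : ℝ) ≤ n := (le_mul_of_one_le_right zero_le_two (le_max_left _ _)).trans hnC
    exact_mod_cast this
  have hties := measure_IUalloc_eq_IUalloc_eq_zero hXA hXAB hn ha hb hindep hFa hFb
  have hpure (i : Fin n) := mul_toReal_measure_eq_add_toReal_measure_lt_le (P := P) (x := xA i)
    hα1 (measurable_IUalloc (X := XB) (i := i) hb)
  have hmixed (i : Fin n) := integral_toReal_measure_IUalloc_le_eq α ha hb hindep i (hties i)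
  have hW : 0 < ∑ j, wA j :=
    sum_pos (fun j _ => hwlo.trans_le (hwA j).1) ⟨⟨0, by omega⟩, mem_univ _⟩
  have hlhs := (sum_le_sum fun i _ => mul_le_mul_of_nonneg_left (hpure i)
    (hwlo.trans_le (hwA i).1).le).trans_eq (sum_mul_eq_sum_mul_nv hW.ne' _)
  have hrhs := sum_mul_eq_sum_mul_nv hW.ne'
    fun i => ∫ ω, (P {ω' | IUalloc XB b i ω' ≤ IUalloc XA a i ω}).toReal ∂P
  simp only [hmixed] at hrhs hyp
  linarith [mul_le_mul_of_nonneg_left hyp hW.le, mul_pos hε hW]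

/-- Sufficient condition (ignoring ties) for the approximate-equilibrium bound of player A. -/
theorem stmt12 (wlo whi XA XB α : ℝ) (hwlo : 0 < wlo) (hw : wlo ≤ whi)
    (hXA : 0 < XA) (hXAB : XA ≤ XB) (hα0 : 0 ≤ α) (hα1 : α ≤ 1) :
    ∃ C₀ : ℝ, 0 < C₀ ∧
      ∀ ε : ℝ, 0 < ε → ε ≤ 1 →
      ∀ n : ℕ, 1 ≤ n → C₀ * max 1 (Real.log ε⁻¹) ≤ (n : ℝ) →
      ∀ (wA wB : Fin n → ℝ),
        (∀ i, wlo ≤ wA i ∧ wA i ≤ whi) → (∀ i, wlo ≤ wB i ∧ wB i ≤ whi) →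
      ∀ γ : ℝ, 0 < γ → Eq2 XA XB wA wB γ →
      ∀ (Ω : Type) (_ : MeasurableSpace Ω) (P : Measure Ω), IsProbabilityMeasure P →
      ∀ (a b : Fin n → Ω → ℝ),
        (∀ i, Measurable (a i)) → (∀ i, Measurable (b i)) →
        ProbabilityTheory.iIndepFun (Sum.elim a b) P →
        (∀ i x, P {ω | a i ω ≤ x} = ENNReal.ofReal (FAstar XA XB wA wB γ i x)) →
        (∀ i x, P {ω | b i ω ≤ x} = ENNReal.ofReal (FBstar XA XB wA wB γ i x)) →
      ∀ (xA : Fin n → ℝ), (∀ i, 0 ≤ xA i) → (∑ i, xA i ≤ XA) →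
      (∑ i, nv wA i * (P {ω | IUalloc XB b i ω ≤ xA i}).toReal
          ≤ (∑ i, nv wA i *
              ∫ ω, (P {ω' | IUalloc XB b i ω' ≤ IUalloc XA a i ω}).toReal ∂P) + ε / 2) →
      ∑ i, wA i * (α * (P {ω | IUalloc XB b i ω = xA i}).toReal
            + (P {ω | IUalloc XB b i ω < xA i}).toReal)
        ≤ (∑ i, wA i * (α * (P {ω | IUalloc XA a i ω = IUalloc XB b i ω}).toReal
            + (P {ω | IUalloc XB b i ω < IUalloc XA a i ω}).toReal))
          + ε * ∑ j, wA j :=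
  stmt12_general wlo whi XA XB α hwlo hXA hXAB hα1
end

section
/- (Constant-sum case.) Suppose the Blotto data satisfies w^A_i = w^B_i for every i ∈ {1,…,n}. Then γ = X_B/X_A is a positive solution of Equation (2) and it is the unique positive solution; moreover for γ* = X_B/X_A one has Ω_A(γ*) = ∅ (equivalently, v^A_i/v^B_i = 1 ≤ γ* for all i), and the associated multipliers are λ*_A = 1/(2X_B) and λ*_B = X_A/(2X_B²). -/
open Finset

/-- Constant-sum case: γ = X_B/X_A is the unique positive solution of Equation (2),
Ω_A(γ*) is empty, and the multipliers take their closed forms. -/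
theorem stmt14 (n : ℕ) (hn : 1 ≤ n) (XA XB : ℝ) (hXA : 0 < XA) (hXAB : XA ≤ XB)
    (wA wB : Fin n → ℝ) (hwA : ∀ i, 0 < wA i) (hconst : ∀ i, wA i = wB i) :
    0 < XB / XA ∧ Eq2 XA XB wA wB (XB / XA) ∧
    (∀ γ : ℝ, 0 < γ → Eq2 XA XB wA wB γ → γ = XB / XA) ∧
    OmegaA wA wB (XB / XA) = ∅ ∧
    lamA XB wA wB (XB / XA) = 1 / (2 * XB) ∧
    lamB XA wA wB (XB / XA) = XA / (2 * XB ^ 2) := by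
  have hBA : wB = wA := funext fun i => (hconst i).symm
  subst hBA
  have hne : (Finset.univ : Finset (Fin n)).Nonempty := by
    have : 0 < n := hn
    exact ⟨⟨0, this⟩, mem_univ _⟩
  have hW : 0 < ∑ j, wB j := Finset.sum_pos (fun i _ => hwA i) hne
  have hnvpos : ∀ i, 0 < nv wB i := fun i => div_pos (hwA i) hW
  have hsum1 : ∑ i, nv wB i = 1 := by
    simp only [nv, ← Finset.sum_div]
    exact div_self hW.ne'
  have hsq : ∀ i, (nv wB i) ^ 2 / nv wB i = nv wB i := fun i => by
    rw [sq, mul_div_assoc, div_self (hnvpos i).ne', mul_one]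
  have hXB : 0 < XB := lt_of_lt_of_le hXA hXAB
  -- OmegaA description
  have hOmega : ∀ γ : ℝ, OmegaA wB wB γ = if γ < 1 then Finset.univ else ∅ := by
    intro γ
    unfold OmegaA
    split_ifs with h
    · apply Finset.filter_true_of_mem
      intro i _
      rw [div_self (hnvpos i).ne']
      exact h
    · apply Finset.filter_false_of_mem
      intro i _
      rw [div_self (hnvpos i).ne']
      exact h
  -- Eq2 simplification
  have hEq2 : ∀ γ : ℝ, 0 < γ → (Eq2 XA XB wB wB γ ↔ XB * γ / XA = γ ^ 2) := by
    intro γ hγ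
    have hγ2 : (γ:ℝ) ^ 2 ≠ 0 := by positivity
    unfold Eq2
    rw [hOmega γ]
    split_ifs with h
    · rw [Finset.compl_univ]
      simp only [Finset.sum_empty, Finset.sum_congr rfl (fun i _ => hsq i), hsum1,
        mul_zero, add_zero, mul_one, div_one]
    · rw [Finset.compl_empty]
      simp only [Finset.sum_empty, Finset.sum_congr rfl (fun i _ => hsq i), hsum1,
        mul_zero, zero_add, mul_one]
      rw [one_div, inv_inv]
  have hγpos : 0 < XB / XA := div_pos hXB hXA
  have hstar : Eq2 XA XB wB wB (XB / XA) := by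
    rw [hEq2 _ hγpos]
    field_simp
  have hOstar : OmegaA wB wB (XB / XA) = ∅ := by
    rw [hOmega]
    rw [if_neg]
    rw [not_lt]
    exact (one_le_div hXA).mpr hXAB
  refine ⟨hγpos, hstar, ?_, hOstar, ?_, ?_⟩
  · intro γ hγ hEq
    rw [hEq2 γ hγ] at hEq
    field_simp at hEq
    rw [eq_div_iff hXA.ne']
    have h2 : γ * XB = γ * (γ * XA) := by nlinarith [hEq]
    have := mul_left_cancel₀ hγ.ne' h2
    linarith
  · unfold lamA
    rw [hOstar, Finset.compl_empty]
    simp [hsum1]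
  · unfold lamB
    rw [hOstar, Finset.compl_empty]
    rw [Finset.sum_congr rfl (fun i _ => hsq i), hsum1]
    simp only [Finset.sum_empty, mul_zero, zero_add, mul_one]
    rw [div_pow]
    field_simp
end

section
/- Let α ∈ (0,1), R > 0 and 0 < ε < min{α, 1−α}. For all x, y* ≥ 0, if |μ^R_A(x, y*) − β_A(x, y*)| ≥ ε (where β_A is the Blotto function with tie parameter α), then x ≠ y*; moreover if x < y* then x ≥ y* · (ε(1−α)/((1−ε)α))^{1/R}, and if x > y* then x ≤ y* · ((1−ε)(1−α)/(εα))^{1/R}. -/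
/-- The power-form CSF μ^R_A with tie parameter α. -/
noncomputable def muA (R α x y : ℝ) : ℝ :=
  if x = 0 ∧ y = 0 then α
  else α * x ^ R / (α * x ^ R + (1 - α) * y ^ R)

lemma root_le (R a b c : ℝ) (hR : 0 < R) (ha : 0 ≤ a) (hb : 0 ≤ b) (hc : 0 ≤ c)
    (hab : a ^ R ≤ b ^ R * c) : a ≤ b * c ^ (1 / R) := by
  have h1 := Real.rpow_le_rpow (by positivity) hab (by positivity : (0:ℝ) ≤ 1 / R)
  rwa [Real.mul_rpow (by positivity) hc, ← Real.rpow_mul ha, ← Real.rpow_mul hb,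
    mul_one_div, div_self hR.ne', Real.rpow_one, Real.rpow_one] at h1

lemma le_root (R a b c : ℝ) (hR : 0 < R) (ha : 0 ≤ a) (hb : 0 ≤ b) (hc : 0 ≤ c)
    (hab : b ^ R * c ≤ a ^ R) : b * c ^ (1 / R) ≤ a := by
  have h1 := Real.rpow_le_rpow (by positivity) hab (by positivity : (0:ℝ) ≤ 1 / R)
  rwa [Real.mul_rpow (by positivity) hc, ← Real.rpow_mul ha, ← Real.rpow_mul hb,
    mul_one_div, div_self hR.ne', Real.rpow_one, Real.rpow_one] at h1

/-- Where the power-form CSF differs from the Blotto function by at least ε,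
the ratio of the two allocations is close to 1. -/
theorem stmt18 (α R ε : ℝ) (hα0 : 0 < α) (hα1 : α < 1) (hR : 0 < R)
    (hε0 : 0 < ε) (hε : ε < min α (1 - α)) (x yst : ℝ) (hx : 0 ≤ x) (hy : 0 ≤ yst)
    (h : ε ≤ |muA R α x yst - betaA α x yst|) :
    x ≠ yst ∧
    (x < yst → yst * (ε * (1 - α) / ((1 - ε) * α)) ^ (1 / R) ≤ x) ∧
    (yst < x → x ≤ yst * ((1 - ε) * (1 - α) / (ε * α)) ^ (1 / R)) := by
  rw [lt_min_iff] at hε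
  obtain ⟨hεα, hεα'⟩ := hε
  have h1ε : 0 < 1 - ε := by linarith
  have h1α : 0 < 1 - α := by linarith
  have hne : x ≠ yst := by
    intro heq
    subst heq
    rcases eq_or_lt_of_le hx with hx0 | hx0
    · simp [muA, betaA, ← hx0] at h
      linarith [abs_nonneg (0:ℝ)]
    · have hX : (0:ℝ) < x ^ R := Real.rpow_pos_of_pos hx0 R
      have hmu : muA R α x x = α := by
        rw [muA, if_neg (by intro ⟨h1, _⟩; exact hx0.ne' h1),
          show α * x ^ R + (1 - α) * x ^ R = x ^ R by ring, mul_div_assoc,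
          div_self hX.ne', mul_one]
      rw [hmu, betaA, if_neg (lt_irrefl x), if_pos rfl, sub_self, abs_zero] at h
      linarith
  refine ⟨hne, ?_, ?_⟩
  · intro hlt
    have hy0 : 0 < yst := lt_of_le_of_lt hx hlt
    have hY : (0:ℝ) < yst ^ R := Real.rpow_pos_of_pos hy0 R
    have hX : (0:ℝ) ≤ x ^ R := Real.rpow_nonneg hx R
    have hD : 0 < α * x ^ R + (1 - α) * yst ^ R := by nlinarith
    have hmu : muA R α x yst = α * x ^ R / (α * x ^ R + (1 - α) * yst ^ R) := by
      rw [muA, if_neg (by intro ⟨_, h2⟩; exact hy0.ne' h2)]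
    have hb : betaA α x yst = 0 := by
      rw [betaA, if_neg (by linarith), if_neg (by exact hne)]
    rw [hmu, hb, sub_zero, abs_of_nonneg (by positivity)] at h
    rw [le_div_iff₀ hD] at h
    apply le_root R x yst _ hR hx hy (by positivity)
    rw [mul_div_assoc', div_le_iff₀ (by positivity)]
    nlinarith
  · intro hlt
    have hx0 : 0 < x := lt_of_le_of_lt hy hlt
    have hX : (0:ℝ) < x ^ R := Real.rpow_pos_of_pos hx0 R
    have hY : (0:ℝ) ≤ yst ^ R := Real.rpow_nonneg hy R
    have hD : 0 < α * x ^ R + (1 - α) * yst ^ R := by nlinarith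
    have hmu : muA R α x yst = α * x ^ R / (α * x ^ R + (1 - α) * yst ^ R) := by
      rw [muA, if_neg (by intro ⟨h1, _⟩; exact hx0.ne' h1)]
    have hb : betaA α x yst = 1 := by rw [betaA, if_pos hlt]
    have hle1 : muA R α x yst ≤ 1 := by
      rw [hmu, div_le_one hD]; nlinarith
    rw [hb, abs_of_nonpos (by linarith), neg_sub] at h
    rw [hmu] at h
    have h2 : α * x ^ R / (α * x ^ R + (1 - α) * yst ^ R) ≤ 1 - ε := by linarith
    rw [div_le_iff₀ hD] at h2
    apply root_le R x yst _ hR hx hy (by positivity)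
    rw [mul_div_assoc', le_div_iff₀ (by positivity)]
    nlinarith
end
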